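/- arXiv:2107.14116 — 6 statements merged into one kernel-verified Lean document; each statement's English description precedes it below -/
import Mathlib

section
/- Let X be a graph and F ⊆ X a connected subgraph such that X is F-guided. If γ is an edge path in X with vertices x₁, …, xₙ, then the union L(x₁) ∪ L(x₂) ∪ … ∪ L(xₙ) is a connected subset of F. -/
open SimpleGraph
open Classical

/-- The guide set `L(x)`: `{x}` if `x ∈ F`, and `lk(x) ∩ F` (the vertices of `F`
adjacent to `x` in `X`) otherwise. -/
noncomputable def guideSet {V : Type*} (X : SimpleGraph V) (F : Set V) (x : V) : Set V :=
  if x ∈ F then {x} else F ∩ X.neighborSet x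

/-- A set of vertices is a connected subset if the induced subgraph is connected. -/
def ConnSet {V : Type*} (X : SimpleGraph V) (S : Set V) : Prop :=
  (X.induce S).Connected

/-- `X` is `F`-guided. -/
def IsGuided {V : Type*} (X : SimpleGraph V) (F : Set V) : Prop :=
  ConnSet X F ∧
  (∀ x : V, (guideSet X F x).Nonempty ∧ ConnSet X (guideSet X F x)) ∧
  (∀ x y : V, X.Adj x y →
    (x ∈ F ∧ y ∈ F) ∨
      ((guideSet X F x ∩ guideSet X F y).Nonempty ∧
        ConnSet X (guideSet X F x ∩ guideSet X F y)))

lemma guide_pair_connected {V : Type*} (X : SimpleGraph V) (F : Set V)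
    (hXF : IsGuided X F) {x y : V} (h : X.Adj x y) :
    ConnSet X (guideSet X F x ∪ guideSet X F y) := by
  rcases hXF.2.2 x y h with ⟨hx, hy⟩ | ⟨hne, _⟩
  · have : guideSet X F x ∪ guideSet X F y = {x, y} := by
      simp [guideSet, hx, hy, Set.singleton_union, Set.pair_comm]
    rw [ConnSet, this]
    exact induce_pair_connected_of_adj h
  · exact induce_union_connected (Connected.preconnected (hXF.2.1 x).2) (Connected.preconnected (hXF.2.1 y).2) hne

theorem guided_walk_union_connected {V : Type*} (X : SimpleGraph V) (F : Set V)
    (hXF : IsGuided X F) {u v : V} (γ : X.Walk u v) :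
    ConnSet X (⋃ x ∈ γ.support, guideSet X F x) := by
  induction γ with
  | nil =>
    simpa [SimpleGraph.Walk.support_nil] using (hXF.2.1 _).2
  | @cons a b c h p ih =>
    have hU : (⋃ x ∈ (SimpleGraph.Walk.cons h p).support, guideSet X F x)
        = (guideSet X F a ∪ guideSet X F b) ∪ (⋃ x ∈ p.support, guideSet X F x) := by
      rw [SimpleGraph.Walk.support_cons]
      have hb : guideSet X F b ⊆ ⋃ x ∈ p.support, guideSet X F x :=
        Set.subset_biUnion_of_mem p.start_mem_support
      simp only [List.mem_cons, Set.iUnion_iUnion_eq_or_left]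
      rw [Set.union_assoc, Set.union_eq_right.mpr hb]
    rw [ConnSet, hU]
    apply induce_union_connected (Connected.preconnected (guide_pair_connected X F hXF h)) (Connected.preconnected ih)
    obtain ⟨z, hz⟩ := (hXF.2.1 b).1
    exact ⟨z, Or.inr hz, Set.mem_biUnion p.start_mem_support hz⟩
end

section
/- Let X be a graph and F ⊆ X a connected subgraph such that X is F-guided. If F is a tree, then X is quasi-isometric to a tree, with quasi-isometry constants independent of X and F. -/
open SimpleGraph
open Classical

universe u

namespace Guided

structure Ctx : Type (u+1) where
  V : Type u
  X : SimpleGraph V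
  F : Set V
  hG : IsGuided X F
  hT : (X.induce F).IsTree

namespace Ctx

variable (C : Ctx)

abbrev N := ↥C.F
noncomputable abbrev Γ : SimpleGraph C.N := C.X.induce C.F

lemma treeΓ : C.Γ.IsTree := C.hT

noncomputable def r : C.N := C.treeΓ.isConnected.nonempty.some

/-- the unique path between two vertices of the tree `Γ`. -/
noncomputable def pth (a b : C.N) : C.Γ.Walk a b :=
  (C.treeΓ.existsUnique_path a b).choose

lemma pth_isPath (a b : C.N) : (C.pth a b).IsPath :=
  (C.treeΓ.existsUnique_path a b).choose_spec.1

lemma pth_unique {a b : C.N} (W : C.Γ.Walk a b) (hW : W.IsPath) : W = C.pth a b :=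
  (C.treeΓ.existsUnique_path a b).choose_spec.2 W hW

/-- tree interval -/
def I (a b : C.N) : Set C.N := {z | z ∈ (C.pth a b).support}

noncomputable def ell (a b : C.N) : ℕ := (C.pth a b).length

lemma left_mem_I (a b : C.N) : a ∈ C.I a b := SimpleGraph.Walk.start_mem_support _
lemma right_mem_I (a b : C.N) : b ∈ C.I a b := SimpleGraph.Walk.end_mem_support _

lemma ell_eq_dist (a b : C.N) : C.ell a b = C.Γ.dist a b := by
  refine le_antisymm ?_ (SimpleGraph.dist_le _)
  obtain ⟨W, hW⟩ := C.treeΓ.isConnected.exists_walk_length_eq_dist a b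
  have h1 : W.bypass = C.pth a b := C.pth_unique _ W.bypass_isPath
  have h2 : C.ell a b = W.bypass.length := by unfold ell; rw [h1]
  rw [h2, ← hW]
  exact W.length_bypass_le

lemma ell_triangle (a b c : C.N) : C.ell a c ≤ C.ell a b + C.ell b c := by
  rw [ell_eq_dist, ell_eq_dist, ell_eq_dist]
  exact C.treeΓ.isConnected.dist_triangle

lemma ell_comm (a b : C.N) : C.ell a b = C.ell b a := by
  rw [ell_eq_dist, ell_eq_dist]; exact SimpleGraph.dist_comm

lemma ell_le_walk (a b : C.N) (W : C.Γ.Walk a b) : C.ell a b ≤ W.length := by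
  rw [ell_eq_dist]; exact SimpleGraph.dist_le _

/-- any walk's support contains the interval -/
lemma I_subset_walk_support {a b : C.N} (W : C.Γ.Walk a b) : C.I a b ⊆ {z | z ∈ W.support} := by
  intro z hz
  have h1 : W.bypass = C.pth a b := C.pth_unique _ W.bypass_isPath
  have : z ∈ W.bypass.support := by rw [h1]; exact hz
  exact W.support_bypass_subset this

lemma I_comm (a b : C.N) : C.I a b = C.I b a := by
  have h1 : (C.pth a b).reverse = C.pth b a := C.pth_unique _ (C.pth_isPath a b).reverse
  ext z
  constructor <;> intro hz
  · show z ∈ (C.pth b a).support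
    rw [← h1, SimpleGraph.Walk.support_reverse, List.mem_reverse]; exact hz
  · show z ∈ (C.pth a b).support
    have : z ∈ (C.pth a b).reverse.support := by rw [h1]; exact hz
    rw [SimpleGraph.Walk.support_reverse, List.mem_reverse] at this; exact this

lemma I_refl (a : C.N) : C.I a a = {a} := by
  have h1 : (SimpleGraph.Walk.nil : C.Γ.Walk a a) = C.pth a a :=
    C.pth_unique _ SimpleGraph.Walk.IsPath.nil
  ext z; show z ∈ (C.pth a a).support ↔ _
  rw [← h1]; simp

/-- splitting a path at an interior point -/
lemma pth_split {a b z : C.N} (hz : z ∈ C.I a b) :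
    (C.pth a z).append (C.pth z b) = C.pth a b := by
  have hsp := (C.pth a b).take_spec (u := z) hz
  have h1 : (C.pth a b).takeUntil z hz = C.pth a z :=
    C.pth_unique _ ((C.pth_isPath a b).takeUntil hz)
  have h2 : (C.pth a b).dropUntil z hz = C.pth z b :=
    C.pth_unique _ ((C.pth_isPath a b).dropUntil hz)
  rw [← h1, ← h2]; exact hsp

lemma ell_add_of_mem {a b z : C.N} (hz : z ∈ C.I a b) :
    C.ell a z + C.ell z b = C.ell a b := by
  have := C.pth_split hz
  have h := congrArg SimpleGraph.Walk.length this
  rw [SimpleGraph.Walk.length_append] at h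
  exact h

lemma I_union_of_mem {a b z : C.N} (hz : z ∈ C.I a b) :
    C.I a b = C.I a z ∪ C.I z b := by
  have hsp := C.pth_split hz
  ext y
  constructor
  · intro hy
    have : y ∈ ((C.pth a z).append (C.pth z b)).support := by rw [hsp]; exact hy
    rw [SimpleGraph.Walk.mem_support_append_iff] at this
    exact this.imp id id
  · intro hy
    show y ∈ (C.pth a b).support
    rw [← hsp, SimpleGraph.Walk.mem_support_append_iff]
    exact hy.imp id id

lemma I_subset_left {a b z : C.N} (hz : z ∈ C.I a b) : C.I a z ⊆ C.I a b := by
  rw [C.I_union_of_mem hz]; exact Set.subset_union_left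

lemma I_subset_right {a b z : C.N} (hz : z ∈ C.I a b) : C.I z b ⊆ C.I a b := by
  rw [C.I_union_of_mem hz]; exact Set.subset_union_right

/-- subadditivity of intervals -/
lemma I_subset_union (a b z : C.N) : C.I a b ⊆ C.I a z ∪ C.I z b := by
  intro y hy
  have := C.I_subset_walk_support ((C.pth a z).append (C.pth z b)) hy
  rw [Set.mem_setOf_eq, SimpleGraph.Walk.mem_support_append_iff] at this
  exact this.imp id id

/-- characterization of interval membership by additivity of lengths -/
lemma mem_I_of_ell {a b z : C.N} (h : C.ell a z + C.ell z b = C.ell a b) :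
    z ∈ C.I a b := by
  set W := (C.pth a z).append (C.pth z b) with hW
  have hlen : W.length = C.Γ.dist a b := by
    rw [SimpleGraph.Walk.length_append]
    rw [← C.ell_eq_dist, ← h]; rfl
  have hP : W.IsPath := W.isPath_of_length_eq_dist hlen
  have : W = C.pth a b := C.pth_unique _ hP
  show z ∈ (C.pth a b).support
  rw [← this]
  show z ∈ W.support
  rw [SimpleGraph.Walk.mem_support_append_iff]
  exact Or.inl (SimpleGraph.Walk.end_mem_support _)

lemma ell_self (a : C.N) : C.ell a a = 0 := by
  rw [ell_eq_dist]; exact SimpleGraph.dist_self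

lemma eq_of_ell_eq_zero {a b : C.N} (h : C.ell a b = 0) : a = b :=
  SimpleGraph.Walk.eq_of_length_eq_zero h

lemma ell_mem_le {a b z : C.N} (hz : z ∈ C.I a b) : C.ell a z ≤ C.ell a b := by
  have := C.ell_add_of_mem hz; omega

/-- mutual interval membership implies equality -/
lemma eq_of_mem_mem {a b c : C.N} (h1 : a ∈ C.I c b) (h2 : b ∈ C.I c a) : a = b := by
  have e1 := C.ell_add_of_mem h1
  have e2 := C.ell_add_of_mem h2
  have : C.ell a b = 0 := by
    have hc := C.ell_comm a b
    omega
  exact C.eq_of_ell_eq_zero this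

/-- comparability of points on a root interval -/
lemma I_comparable {a b u : C.N} (ha : a ∈ C.I (C.r) u) (hb : b ∈ C.I (C.r) u) :
    a ∈ C.I (C.r) b ∨ b ∈ C.I (C.r) a := by
  have hsplit : a ∈ C.I (C.r) b ∪ C.I b u := by
    rw [← C.I_union_of_mem hb]; exact ha
  rcases hsplit with h | h
  · exact Or.inl h
  · right
    have e1 := C.ell_add_of_mem hb
    have e2 := C.ell_add_of_mem h
    have e3 := C.ell_add_of_mem ha
    apply C.mem_I_of_ell
    omega

/-- sandwich: if b is on [r,u] and z on [b,u] then b is on [r,z]. -/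
lemma mem_I_trans {b u z : C.N} (hb : b ∈ C.I (C.r) u) (hz : z ∈ C.I b u) :
    b ∈ C.I (C.r) z := by
  have e1 := C.ell_add_of_mem hb
  have e2 := C.ell_add_of_mem hz
  have t1 := C.ell_triangle (C.r) b z
  have t2 := C.ell_triangle (C.r) z u
  have hzu : z ∈ C.I (C.r) u := C.I_subset_right hb hz
  have e3 := C.ell_add_of_mem hzu
  apply C.mem_I_of_ell
  omega

end Ctx
end Guided

lemma firstMeet {V' : Type u} {G : SimpleGraph V'} {a c : V'} (W : G.Walk a c) (S : Set V')
    (hc : c ∈ S) :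
    ∃ (m : V') (Q : G.Walk a m) (R : G.Walk m c),
      Q.append R = W ∧ m ∈ S ∧ ∀ y ∈ Q.support, y ∈ S → y = m := by
  induction W with
  | nil =>
    exact ⟨_, SimpleGraph.Walk.nil, SimpleGraph.Walk.nil, rfl, hc, by simp⟩
  | @cons x y z h W' ih =>
    by_cases hx : x ∈ S
    · refine ⟨x, SimpleGraph.Walk.nil, SimpleGraph.Walk.cons h W', rfl, hx, by simp⟩
    · obtain ⟨m, Q, R, hQR, hm, hfresh⟩ := ih hc
      refine ⟨m, SimpleGraph.Walk.cons h Q, R, by rw [SimpleGraph.Walk.cons_append, hQR], hm, ?_⟩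
      intro u hu huS
      rw [SimpleGraph.Walk.support_cons, List.mem_cons] at hu
      rcases hu with rfl | hu
      · exact absurd huS hx
      · exact hfresh u hu huS

namespace Guided
namespace Ctx
variable (C : Ctx)

lemma median (a b : C.N) : ∃ m : C.N, m ∈ C.I C.r a ∧ m ∈ C.I C.r b ∧
    C.I m a ⊆ C.I a b ∧ C.I m b ⊆ C.I a b := by
  obtain ⟨m, Q, R, hQR, hm, hfresh⟩ := firstMeet (C.pth a C.r) (C.I C.r b) (C.left_mem_I _ _)
  have hQpath : Q.IsPath := by
    have : (Q.append R).IsPath := by rw [hQR]; exact C.pth_isPath _ _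
    exact this.of_append_left
  have hQ : Q = C.pth a m := C.pth_unique _ hQpath
  have hmra : m ∈ C.I C.r a := by
    rw [C.I_comm]
    show m ∈ (C.pth a C.r).support
    rw [← hQR, SimpleGraph.Walk.mem_support_append_iff]
    exact Or.inl (SimpleGraph.Walk.end_mem_support _)
  -- the concatenated walk a → m → b is a path
  set W2 := Q.append (C.pth m b) with hW2
  have hImb_sub : C.I m b ⊆ C.I C.r b := C.I_subset_right hm
  have htail : (C.pth m b).support = m :: (C.pth m b).support.tail :=
    SimpleGraph.Walk.support_eq_cons _
  have hmnotin : m ∉ (C.pth m b).support.tail := by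
    have hnd : (C.pth m b).support.Nodup := (C.pth_isPath m b).2
    rw [htail] at hnd
    exact (List.nodup_cons.mp hnd).1
  have hW2path : W2.IsPath := by
    rw [SimpleGraph.Walk.isPath_def, SimpleGraph.Walk.support_append, List.nodup_append]
    refine ⟨hQpath.2, ?_, ?_⟩
    · have hnd : (C.pth m b).support.Nodup := (C.pth_isPath m b).2
      rw [htail] at hnd
      exact (List.nodup_cons.mp hnd).2
    · intro y hy y' hy2 hyy'
      subst hyy'
      have hyS : y ∈ C.I C.r b := hImb_sub (List.tail_subset _ hy2)
      have := hfresh y hy hyS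
      subst this
      exact hmnotin hy2
  have hW2eq : W2 = C.pth a b := C.pth_unique _ hW2path
  refine ⟨m, hmra, hm, ?_, ?_⟩
  · intro z hz
    rw [C.I_comm] at hz
    show z ∈ (C.pth a b).support
    rw [← hW2eq, SimpleGraph.Walk.mem_support_append_iff]
    left; rw [hQ] at *; exact hz
  · intro z hz
    show z ∈ (C.pth a b).support
    rw [← hW2eq, SimpleGraph.Walk.mem_support_append_iff]
    right; exact hz

/-- predecessor along the path to the root -/
lemma exists_prev {b : C.N} (hb : b ≠ C.r) :
    ∃ bp : C.N, C.Γ.Adj b bp ∧ b ∉ C.I C.r bp ∧ C.I C.r b = insert b (C.I C.r bp) ∧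
      C.ell C.r b = C.ell C.r bp + 1 := by
  obtain ⟨bp, hadj, W', hW'⟩ := (C.pth b C.r).exists_eq_cons_of_ne hb
  have hWpath : (SimpleGraph.Walk.cons hadj W').IsPath := by rw [← hW']; exact C.pth_isPath _ _
  have hW'path : W'.IsPath := hWpath.of_cons
  have hW'eq : W' = C.pth bp C.r := C.pth_unique _ hW'path
  have hbnot : b ∉ W'.support := ((SimpleGraph.Walk.cons_isPath_iff _ _).mp hWpath).2
  refine ⟨bp, hadj, ?_, ?_, ?_⟩
  · rw [C.I_comm]
    intro hmem
    apply hbnot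
    rw [hW'eq]; exact hmem
  · have hsupp : (C.pth b C.r).support = b :: W'.support := by
      rw [hW']; exact SimpleGraph.Walk.support_cons _ _
    ext z
    rw [C.I_comm]
    show z ∈ (C.pth b C.r).support ↔ _
    rw [hsupp, List.mem_cons]
    constructor
    · rintro (rfl | hz)
      · exact Set.mem_insert _ _
      · exact Set.mem_insert_of_mem _ (by rw [C.I_comm]; show z ∈ (C.pth bp C.r).support; rw [← hW'eq]; exact hz)
    · rintro (rfl | hz)
      · exact Or.inl rfl
      · right; rw [C.I_comm] at hz; show z ∈ W'.support; rw [hW'eq]; exact hz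
  · have h1 : C.ell b C.r = C.ell bp C.r + 1 := by
      unfold ell
      rw [← C.pth_unique _ hWpath, ← hW'eq]
      simp [SimpleGraph.Walk.length_cons]
    rw [C.ell_comm, h1, C.ell_comm]

/-- interval of adjacent vertices -/
lemma I_adj {a b : C.N} (h : C.Γ.Adj a b) : C.I a b = {a, b} := by
  have hP : (SimpleGraph.Walk.cons h SimpleGraph.Walk.nil).IsPath := by
    rw [SimpleGraph.Walk.isPath_def]; simp [h.ne]
  have := C.pth_unique _ hP
  ext z
  show z ∈ (C.pth a b).support ↔ _
  rw [← this]
  simp [Set.mem_insert_iff]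

end Ctx
end Guided

namespace Guided
namespace Ctx
variable (C : Ctx)

lemma guideSet_sub (x : C.V) : guideSet C.X C.F x ⊆ C.F := by
  unfold guideSet
  by_cases hx : x ∈ C.F
  · rw [if_pos hx]; intro z hz; rw [Set.mem_singleton_iff] at hz; subst hz; exact hx
  · rw [if_neg hx]; exact Set.inter_subset_left

lemma exists_walk_in (S : Set C.V) (hS : S ⊆ C.F) (hconn : ConnSet C.X S) {a b : C.N}
    (ha : ↑a ∈ S) (hb : ↑b ∈ S) : C.I a b ⊆ {z : C.N | ↑z ∈ S} := by
  let φ : (C.X.induce S) →g C.Γ := ⟨fun z => ⟨z.1, hS z.2⟩, fun {u v} h => h⟩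
  have hreach := (hconn.preconnected ⟨↑a, ha⟩ ⟨↑b, hb⟩)
  let W₀ := hreach.some
  have heq1 : φ ⟨↑a, ha⟩ = a := Subtype.ext rfl
  have heq2 : φ ⟨↑b, hb⟩ = b := Subtype.ext rfl
  let W : C.Γ.Walk a b := (W₀.map φ).copy heq1 heq2
  intro z hz
  have hz2 := C.I_subset_walk_support W hz
  have : z ∈ (W₀.map φ).support := by
    have := hz2
    rwa [SimpleGraph.Walk.support_copy] at this
  rw [SimpleGraph.Walk.support_map, List.mem_map] at this
  obtain ⟨y, hy, rfl⟩ := this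
  exact y.2


def Lset (x : C.V) : Set C.N := {z : C.N | ↑z ∈ guideSet C.X C.F x}

lemma I_subset_Lset (x : C.V) {a b : C.N} (ha : a ∈ C.Lset x) (hb : b ∈ C.Lset x) :
    C.I a b ⊆ C.Lset x :=
  C.exists_walk_in (guideSet C.X C.F x) (C.guideSet_sub x) (C.hG.2.1 x).2 ha hb

lemma mem_Lset_self (a : C.N) : a ∈ C.Lset ↑a := by
  show ↑a ∈ guideSet C.X C.F ↑a
  unfold guideSet
  rw [if_pos a.2]
  rfl

lemma Lset_coe (a : C.N) : C.Lset ↑a = {a} := by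
  ext z
  show ↑z ∈ guideSet C.X C.F ↑a ↔ _
  unfold guideSet
  rw [if_pos a.2]
  constructor
  · intro h; exact Subtype.ext h
  · rintro rfl; rfl

noncomputable def gam (x : C.V) : C.N :=
  ⟨(C.hG.2.1 x).1.some, C.guideSet_sub x (C.hG.2.1 x).1.some_mem⟩

lemma gam_mem (x : C.V) : C.gam x ∈ C.Lset x := (C.hG.2.1 x).1.some_mem

lemma gam_coe {x : C.V} (hx : x ∈ C.F) : (C.gam x : C.V) = x := by
  have h2 : (C.gam x : C.V) ∈ guideSet C.X C.F x := C.gam_mem x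
  unfold guideSet at h2
  rw [if_pos hx] at h2
  exact h2

lemma adj_of_mem_Lset {x : C.V} (hx : x ∉ C.F) {a : C.N} (ha : a ∈ C.Lset x) :
    C.X.Adj x ↑a := by
  have : ↑a ∈ guideSet C.X C.F x := ha
  unfold guideSet at this
  rw [if_neg hx] at this
  exact this.2

end Ctx
end Guided

namespace Guided
namespace Ctx
variable (C : Ctx)

def Cov (k : ℕ) (a b : C.N) : Prop :=
  ∃ L : List C.V, L.length = k ∧ ∀ z ∈ C.I a b, ∃ x ∈ L, z ∈ C.Lset x

lemma cov_exists (a b : C.N) : ∃ k, C.Cov k a b := by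
  refine ⟨((C.pth a b).support.map (Subtype.val)).length, (C.pth a b).support.map Subtype.val,
    rfl, ?_⟩
  intro z hz
  exact ⟨↑z, List.mem_map_of_mem hz, C.mem_Lset_self z⟩

noncomputable def h (u : C.N) : ℕ := Nat.find (C.cov_exists C.r u)

lemma cov_h (u : C.N) : C.Cov (C.h u) C.r u := Nat.find_spec (C.cov_exists C.r u)

lemma h_le {k : ℕ} {u : C.N} (hk : C.Cov k C.r u) : C.h u ≤ k :=
  Nat.find_le hk

lemma h_mono {w u : C.N} (hw : w ∈ C.I C.r u) : C.h w ≤ C.h u := by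
  obtain ⟨L, hL, hcov⟩ := C.cov_h u
  exact C.h_le ⟨L, hL, fun z hz => hcov z (C.I_subset_left hw hz)⟩

lemma h_pos (u : C.N) : 1 ≤ C.h u := by
  by_contra hc
  push_neg at hc
  interval_cases hu : C.h u
  obtain ⟨L, hL, hcov⟩ := C.cov_h u
  rw [hu] at *
  obtain ⟨x, hx, _⟩ := hcov u (C.right_mem_I _ _)
  rw [List.length_eq_zero_iff] at hL
  subst hL
  simp at hx

lemma cov_extend {w u : C.N} (x : C.V) (hcov : C.I w u ⊆ C.Lset x) :
    C.h u ≤ C.h w + 1 := by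
  obtain ⟨L, hL, hc⟩ := C.cov_h w
  refine C.h_le ⟨L ++ [x], by simp [hL], ?_⟩
  intro z hz
  rcases C.I_subset_union C.r u w hz with h1 | h1
  · obtain ⟨y, hy, hy2⟩ := hc z h1
    exact ⟨y, by simp [hy], hy2⟩
  · exact ⟨x, by simp, hcov h1⟩

lemma h_adj {w u : C.N} (hadj : C.Γ.Adj w u) : C.h u ≤ C.h w + 1 := by
  obtain ⟨L, hL, hc⟩ := C.cov_h w
  refine C.h_le ⟨L ++ [(↑u : C.V)], by simp [hL], ?_⟩
  intro z hz
  rcases C.I_subset_union C.r u w hz with h1 | h1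
  · obtain ⟨y, hy, hy2⟩ := hc z h1
    exact ⟨y, by simp [hy], hy2⟩
  · rw [C.I_adj hadj] at h1
    simp only [Set.mem_insert_iff, Set.mem_singleton_iff] at h1
    rcases h1 with rfl | rfl
    · obtain ⟨y, hy, hy2⟩ := hc z (C.right_mem_I _ _)
      exact ⟨y, by simp [hy], hy2⟩
    · exact ⟨↑z, by simp, C.mem_Lset_self z⟩

lemma h_r : C.h C.r = 1 := by
  refine le_antisymm (C.h_le ⟨[(↑C.r : C.V)], rfl, ?_⟩) (C.h_pos _)
  intro z hz
  rw [C.I_refl, Set.mem_singleton_iff] at hz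
  subst hz
  exact ⟨↑C.r, by simp, C.mem_Lset_self C.r⟩

def cand (u : C.N) : Set C.N := {w | w ∈ C.I C.r u ∧ w ≠ u ∧ C.h w < C.h u}

lemma cand_finite (u : C.N) : (C.cand u).Finite := by
  apply Set.Finite.subset (List.finite_toSet (C.pth C.r u).support)
  intro z hz
  exact hz.1

lemma cand_maxspec {u : C.N} (hne : (C.cand u).Nonempty) :
    ∃ z, z ∈ C.cand u ∧ ∀ y ∈ C.cand u, y ∈ C.I C.r z := by
  obtain ⟨z, hz, hmax⟩ := Set.Finite.exists_maximalFor (fun w => C.ell C.r w) _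
    (C.cand_finite u) hne
  refine ⟨z, hz, ?_⟩
  intro y hy
  rcases C.I_comparable hz.1 hy.1 with h1 | h1
  · have hle : C.ell C.r z ≤ C.ell C.r y := C.ell_mem_le h1
    have heq : C.ell C.r y ≤ C.ell C.r z := hmax hy hle
    have := C.ell_add_of_mem h1
    have hzy : C.ell z y = 0 := by omega
    have := C.eq_of_ell_eq_zero hzy
    subst this
    exact C.right_mem_I _ _
  · exact h1

noncomputable def pchoice (s : Set C.N) : C.N :=
  if hs : ∃ z, z ∈ s ∧ ∀ y ∈ s, y ∈ C.I C.r z then hs.choose else C.r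

noncomputable def par (u : C.N) : C.N := C.pchoice (C.cand u)

lemma par_spec {u : C.N} (hne : (C.cand u).Nonempty) :
    C.par u ∈ C.cand u ∧ ∀ y ∈ C.cand u, y ∈ C.I C.r (C.par u) := by
  have hs := C.cand_maxspec hne
  unfold par pchoice
  rw [dif_pos hs]
  exact hs.choose_spec

lemma par_empty {u : C.N} (he : C.cand u = ∅) : C.par u = C.r := by
  unfold par pchoice
  rw [dif_neg]
  rintro ⟨z, hz, -⟩
  rw [he] at hz
  exact hz

lemma par_eq_of_cand_eq {u w : C.N} (hc : C.cand u = C.cand w) : C.par u = C.par w := by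
  unfold par
  rw [hc]

lemma cand_r : C.cand C.r = ∅ := by
  ext w
  simp only [cand, Set.mem_setOf_eq, Set.mem_empty_iff_false, iff_false]
  rintro ⟨hw, hne, -⟩
  rw [C.I_refl] at hw
  exact hne hw

lemma par_r : C.par C.r = C.r := C.par_empty C.cand_r

lemma cand_empty_cases {u : C.N} (he : C.cand u = ∅) : u = C.r ∨ C.h u = 1 := by
  by_cases hu : u = C.r
  · exact Or.inl hu
  · right
    by_contra hh
    have h2 : 2 ≤ C.h u := by have := C.h_pos u; omega
    have : C.r ∈ C.cand u := by
      refine ⟨C.left_mem_I _ _, fun hr => hu hr.symm, ?_⟩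
      rw [C.h_r]; omega
    rw [he] at this
    exact this

lemma par_ne {u : C.N} (hu : u ≠ C.r) : C.par u ≠ u := by
  by_cases hne : (C.cand u).Nonempty
  · exact (C.par_spec hne).1.2.1
  · rw [Set.not_nonempty_iff_eq_empty] at hne
    rw [C.par_empty hne]
    exact fun hre => hu hre.symm

lemma par_mem_I (u : C.N) : C.par u ∈ C.I C.r u := by
  by_cases hne : (C.cand u).Nonempty
  · exact (C.par_spec hne).1.1
  · rw [Set.not_nonempty_iff_eq_empty] at hne
    rw [C.par_empty hne]
    exact C.left_mem_I _ _

lemma h_par_lt {u : C.N} (hne : (C.cand u).Nonempty) : C.h (C.par u) < C.h u :=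
  (C.par_spec hne).1.2.2

lemma h_le_h_par {u : C.N} (hne : (C.cand u).Nonempty) : C.h u ≤ C.h (C.par u) + 1 := by
  set pu := C.par u with hpu
  have hpune : pu ≠ u := (C.par_spec hne).1.2.1
  obtain ⟨w₀, hadj, W', hW'⟩ := (C.pth pu u).exists_eq_cons_of_ne hpune
  have hw₀mem : w₀ ∈ C.I pu u := by
    show w₀ ∈ (C.pth pu u).support
    rw [hW', SimpleGraph.Walk.support_cons]
    exact List.mem_cons_of_mem _ (SimpleGraph.Walk.start_mem_support _)
  by_cases hwu : w₀ = u
  · subst hwu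
    exact C.h_adj hadj
  · have hw₀ru : w₀ ∈ C.I C.r u := C.I_subset_right (C.par_mem_I u) hw₀mem
    have hge : C.h u ≤ C.h w₀ := by
      by_contra hlt
      push_neg at hlt
      have hcand : w₀ ∈ C.cand u := ⟨hw₀ru, hwu, hlt⟩
      have h1 : w₀ ∈ C.I C.r pu := (C.par_spec hne).2 w₀ hcand
      have h2 : pu ∈ C.I C.r w₀ := C.mem_I_trans (C.par_mem_I u) hw₀mem
      exact hadj.ne (C.eq_of_mem_mem h2 h1)
    calc C.h u ≤ C.h w₀ := hge
      _ ≤ C.h pu + 1 := C.h_adj hadj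

end Ctx
end Guided

namespace Guided
namespace Ctx
variable (C : Ctx)

def gammaHom : C.Γ →g C.X := ⟨fun z => z.1, fun {u v} h => h⟩

lemma adjX {a b : C.N} (h : C.Γ.Adj a b) : C.X.Adj ↑a ↑b := h

lemma reach_F (a : C.N) : C.X.Reachable ↑a ↑C.r := ⟨(C.pth a C.r).map C.gammaHom⟩

lemma reach_root (x : C.V) : C.X.Reachable x ↑C.r := by
  by_cases hx : x ∈ C.F
  · exact C.reach_F ⟨x, hx⟩
  · have hadj : C.X.Adj x ↑(C.gam x) := C.adj_of_mem_Lset hx (C.gam_mem x)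
    exact hadj.reachable.trans (C.reach_F (C.gam x))

lemma Xconn : C.X.Connected := by
  rw [SimpleGraph.connected_iff]
  exact ⟨fun a b => (C.reach_root a).trans (C.reach_root b).symm, ⟨↑C.r⟩⟩

lemma dX_of_common {a b : C.N} {x : C.V} (ha : a ∈ C.Lset x) (hb : b ∈ C.Lset x) :
    C.X.dist ↑a ↑b ≤ 2 := by
  by_cases hx : x ∈ C.F
  · have hL := C.Lset_coe ⟨x, hx⟩
    simp only [Subtype.coe_mk] at hL
    rw [hL] at ha hb
    rw [Set.mem_singleton_iff] at ha hb
    subst ha; subst hb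
    rw [SimpleGraph.dist_self]
    omega
  · have h1 : C.X.Adj ↑a x := (C.adj_of_mem_Lset hx ha).symm
    have h2 : C.X.Adj x ↑b := C.adj_of_mem_Lset hx hb
    have hd := SimpleGraph.dist_le (SimpleGraph.Walk.cons h1 (SimpleGraph.Walk.cons h2 .nil))
    simpa using hd

lemma min_wrt {B : Set C.N} (hfin : B.Finite) (hne : B.Nonempty) :
    ∃ b' ∈ B, ∀ y ∈ B, C.ell C.r b' ≤ C.ell C.r y := by
  obtain ⟨b', hb', hmin⟩ := hfin.exists_minimalFor (fun w => C.ell C.r w) _ hne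
  refine ⟨b', hb', fun y hy => ?_⟩
  by_contra hlt
  push_neg at hlt
  have : C.ell C.r b' ≤ C.ell C.r y := hmin hy hlt.le
  omega

/-- KEY LEMMA: a parent edge has bounded distance in `X`. -/
lemma dX_par (u : C.N) : C.X.dist ↑u ↑(C.par u) ≤ 3 := by
  by_cases hur : u = C.r
  · subst hur
    rw [C.par_r, SimpleGraph.dist_self]
    omega
  obtain ⟨L, hL, hc⟩ := C.cov_h u
  obtain ⟨x₀, hx₀L, hux₀⟩ := hc u (C.right_mem_I _ _)
  set B : Set C.N := {w : C.N | w ∈ C.I C.r u ∧ w ∈ C.Lset x₀} with hB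
  have hBfin : B.Finite := by
    apply Set.Finite.subset (List.finite_toSet (C.pth C.r u).support)
    intro z hz; exact hz.1
  have hBne : B.Nonempty := ⟨u, C.right_mem_I _ _, hux₀⟩
  obtain ⟨b', hb'B, hmin⟩ := C.min_wrt hBfin hBne
  -- erase helper : if I r w is disjoint from Lset x₀ and inside I r u then h w < h u
  have herase : ∀ w : C.N, w ∈ C.I C.r u → (∀ y ∈ C.I C.r w, y ∉ C.Lset x₀) →
      C.h w < C.h u := by
    intro w hwu hdisj
    have hcov : C.Cov (C.h u - 1) C.r w := by
      refine ⟨L.erase x₀, ?_, ?_⟩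
      · have := List.length_erase_add_one hx₀L
        omega
      · intro z hz
        obtain ⟨x, hxL, hzx⟩ := hc z (C.I_subset_left hwu hz)
        have hxne : x ≠ x₀ := by
          rintro rfl
          exact hdisj z hz hzx
        exact ⟨x, (List.mem_erase_of_ne hxne).mpr hxL, hzx⟩
    have := C.h_le hcov
    have := C.h_pos u
    omega
  by_cases hbu : b' = u
  · -- the only point of I r u in Lset x₀ is u itself
    subst hbu
    have honly : ∀ w ∈ B, w = b' := by
      intro w hw
      have h1 : C.ell C.r b' ≤ C.ell C.r w := hmin w hw
      have h2 := C.ell_add_of_mem hw.1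
      have h3 := C.ell_add_of_mem hb'B.1
      have : C.ell w b' = 0 := by
        have hle := C.ell_mem_le hw.1
        omega
      exact C.eq_of_ell_eq_zero this
    obtain ⟨bp, hadj, hbnot, hins, hell⟩ := C.exists_prev hur
    have hbpu : bp ∈ C.I C.r b' := by
      rw [hins]; exact Set.mem_insert_of_mem _ (C.right_mem_I _ _)
    have hbp_lt : C.h bp < C.h b' := by
      apply herase bp hbpu
      intro y hy hyx
      have hyB : y ∈ B := ⟨C.I_subset_left hbpu hy, hyx⟩
      have := honly y hyB
      subst this
      exact hbnot hy
    have hbpne : bp ≠ b' := by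
      rintro rfl
      exact hbnot (C.right_mem_I _ _)
    have hcand : bp ∈ C.cand b' := ⟨hbpu, hbpne, hbp_lt⟩
    have hne : (C.cand b').Nonempty := ⟨bp, hcand⟩
    have hsp := C.par_spec hne
    have h1 : bp ∈ C.I C.r (C.par b') := hsp.2 bp hcand
    have h2 : C.par b' ∈ C.I C.r bp := by
      have := C.par_mem_I b'
      rw [hins] at this
      rcases this with h | h
      · exact absurd h (C.par_ne hur)
      · exact h
    have : C.par b' = bp := C.eq_of_mem_mem h2 h1
    rw [this]
    have hd := SimpleGraph.dist_le (SimpleGraph.Walk.cons (C.adjX hadj) .nil)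
    simp at hd
    omega
  · by_cases hbr : b' = C.r
    · -- whole interval inside Lset x₀
      subst hbr
      have hsub : C.I C.r u ⊆ C.Lset x₀ := C.I_subset_Lset x₀ hb'B.2 hux₀
      have hpu : C.par u ∈ C.Lset x₀ := hsub (C.par_mem_I u)
      have := C.dX_of_common hux₀ hpu
      omega
    · obtain ⟨bp', hadj, hbnot, hins, hell⟩ := C.exists_prev hbr
      have hb'u : b' ∈ C.I C.r u := hb'B.1
      have hbp'b' : bp' ∈ C.I C.r b' := by
        rw [hins]; exact Set.mem_insert_of_mem _ (C.right_mem_I _ _)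
      have hbp'u : bp' ∈ C.I C.r u := C.I_subset_left hb'u hbp'b'
      have hbp_lt : C.h bp' < C.h u := by
        apply herase bp' hbp'u
        intro y hy hyx
        have hyB : y ∈ B := ⟨C.I_subset_left hbp'u hy, hyx⟩
        have h1 : C.ell C.r b' ≤ C.ell C.r y := hmin y hyB
        have h2 := C.ell_mem_le hy
        omega
      have hbp'ne : bp' ≠ u := by
        rintro rfl
        omega
      have hcand : bp' ∈ C.cand u := ⟨hbp'u, hbp'ne, hbp_lt⟩
      have hne : (C.cand u).Nonempty := ⟨bp', hcand⟩
      have hsp := C.par_spec hne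
      have hbp'p : bp' ∈ C.I C.r (C.par u) := hsp.2 bp' hcand
      rcases C.I_comparable (C.par_mem_I u) hb'u with hcase | hcase
      · -- par u ∈ I r b'
        rw [hins] at hcase
        rcases hcase with hpb | hpb
        · -- par u = b'
          have : C.par u ∈ C.Lset x₀ := by rw [hpb]; exact hb'B.2
          have := C.dX_of_common hux₀ this
          omega
        · -- par u ∈ I r bp', so par u = bp'
          have heq : C.par u = bp' := C.eq_of_mem_mem hpb hbp'p
          have hd1 : C.X.dist ↑u ↑b' ≤ 2 := C.dX_of_common hux₀ hb'B.2
          have hd2 : C.X.dist ↑b' ↑(C.par u) ≤ 1 := by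
            rw [heq]
            have hd := SimpleGraph.dist_le (SimpleGraph.Walk.cons (C.adjX hadj) .nil)
            simpa using hd
          have := C.Xconn.dist_triangle (u := (↑u : C.V)) (v := ↑b') (w := ↑(C.par u))
          omega
      · -- b' ∈ I r (par u) : then par u ∈ I b' u ⊆ Lset x₀
        have e1 := C.ell_add_of_mem hcase
        have e2 := C.ell_add_of_mem (C.par_mem_I u)
        have e3 := C.ell_add_of_mem hb'u
        have t1 := C.ell_triangle b' (C.par u) u
        have hmem : C.par u ∈ C.I b' u := by
          apply C.mem_I_of_ell
          omega
        have hsub : C.I b' u ⊆ C.Lset x₀ := C.I_subset_Lset x₀ hb'B.2 hux₀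
        have := C.dX_of_common hux₀ (hsub hmem)
        omega

end Ctx
end Guided

lemma list_max {α : Type u} (f : α → ℕ) : ∀ (l : List α), l ≠ [] → ∃ u ∈ l, ∀ y ∈ l, f y ≤ f u := by
  intro l
  induction l with
  | nil => intro h; exact absurd rfl h
  | cons a l ih =>
    intro _
    by_cases hl : l = []
    · subst hl
      exact ⟨a, by simp, by simp⟩
    · obtain ⟨u, hu, hmax⟩ := ih hl
      by_cases hfa : f a ≤ f u
      · refine ⟨u, List.mem_cons_of_mem _ hu, ?_⟩
        intro y hy
        rcases List.mem_cons.mp hy with rfl | hy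
        · exact hfa
        · exact hmax y hy
      · refine ⟨a, List.mem_cons_self, ?_⟩
        intro y hy
        rcases List.mem_cons.mp hy with rfl | hy
        · exact le_refl _
        · exact le_trans (hmax y hy) (by omega)

namespace Guided
namespace Ctx
variable (C : Ctx)

noncomputable def P (a : C.V) : C.V :=
  if ha : a ∈ C.F then ↑(C.par ⟨a, ha⟩) else ↑(C.gam a)

lemma P_coe (a : C.N) : C.P ↑a = ↑(C.par a) := by
  unfold P
  rw [dif_pos a.2]

lemma P_nmem {a : C.V} (ha : a ∉ C.F) : C.P a = ↑(C.gam a) := by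
  unfold P
  rw [dif_neg ha]

noncomputable def rk (a : C.V) : ℕ :=
  if ha : a ∈ C.F then 2 * C.h ⟨a, ha⟩ + (if (⟨a, ha⟩ : C.N) = C.r then 0 else 1)
  else 2 * C.h (C.gam a) + 2

lemma rk_coe (b : C.N) : C.rk ↑b = 2 * C.h b + (if b = C.r then 0 else 1) := by
  unfold rk
  rw [dif_pos b.2]

lemma P_root : C.P ↑C.r = ↑C.r := by
  rw [C.P_coe, C.par_r]

lemma P_ne {a : C.V} (ha : a ≠ ↑C.r) : C.P a ≠ a := by
  by_cases hF : a ∈ C.F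
  · set b : C.N := ⟨a, hF⟩ with hb
    have hbr : b ≠ C.r := fun h => ha (by rw [← h])
    have h2 : C.P a = ↑(C.par b) := by rw [show a = ↑b from rfl, C.P_coe]
    rw [h2]
    intro hcontra
    exact C.par_ne hbr (Subtype.ext hcontra)
  · rw [C.P_nmem hF]
    intro hcontra
    exact hF (hcontra ▸ (C.gam a).2)

lemma rk_lt {a : C.V} (ha : a ≠ ↑C.r) : C.rk (C.P a) < C.rk a := by
  by_cases hF : a ∈ C.F
  · set b : C.N := ⟨a, hF⟩ with hb
    have hbr : b ≠ C.r := fun h => ha (by rw [← h])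
    have h2 : C.P a = ↑(C.par b) := by rw [show a = ↑b from rfl, C.P_coe]
    have h3 : C.rk a = 2 * C.h b + 1 := by
      rw [show a = ↑b from rfl, C.rk_coe, if_neg hbr]
    rw [h2, C.rk_coe, h3]
    by_cases hne : (C.cand b).Nonempty
    · have := C.h_par_lt hne
      split <;> omega
    · rw [Set.not_nonempty_iff_eq_empty] at hne
      rw [C.par_empty hne]
      rw [if_pos rfl, C.h_r]
      have h4 : C.h b = 1 := by
        rcases C.cand_empty_cases hne with h | h
        · exact absurd h hbr
        · exact h
      omega
  · rw [C.P_nmem hF, C.rk_coe]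
    unfold rk
    rw [dif_neg hF]
    split <;> omega

noncomputable def T : SimpleGraph C.V where
  Adj a b := a ≠ b ∧ (C.P a = b ∨ C.P b = a)
  symm := by
    constructor
    rintro a b ⟨hne, hor⟩
    exact ⟨hne.symm, hor.symm⟩
  loopless := by
    constructor
    rintro a ⟨hne, -⟩
    exact hne rfl

lemma T_step (a : C.V) : C.T.Reachable a (C.P a) := by
  by_cases h : C.P a = a
  · rw [h]
  · exact (SimpleGraph.Adj.reachable ⟨fun hc => h hc.symm, Or.inl rfl⟩)

lemma T_reach_aux : ∀ (n : ℕ) (a : C.V), C.rk a ≤ n → C.T.Reachable a ↑C.r := by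
  intro n
  induction n with
  | zero =>
    intro a hr
    by_cases ha : a = ↑C.r
    · rw [ha]
    · have := C.rk_lt ha
      omega
  | succ n ih =>
    intro a hr
    by_cases ha : a = ↑C.r
    · rw [ha]
    · have hlt := C.rk_lt ha
      exact (C.T_step a).trans (ih (C.P a) (by omega))

lemma T_reach (a : C.V) : C.T.Reachable a ↑C.r := C.T_reach_aux (C.rk a) a le_rfl

lemma T_conn : C.T.Connected := by
  rw [SimpleGraph.connected_iff]
  exact ⟨fun a b => (C.T_reach a).trans (C.T_reach b).symm, ⟨↑C.r⟩⟩

lemma T_acyclic : C.T.IsAcyclic := by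
  intro v c hc
  have hsuppne : c.support ≠ [] := c.support_ne_nil
  obtain ⟨u, hu, hmax⟩ := list_max C.rk c.support hsuppne
  set c' := c.rotate u hu with hc'def
  have hc' : c'.IsCycle := hc.rotate hu
  have hmax' : ∀ y ∈ c'.support, C.rk y ≤ C.rk u := by
    intro y hy
    rw [SimpleGraph.Walk.support_eq_cons] at hy
    rcases List.mem_cons.mp hy with rfl | hy
    · exact le_rfl
    · have hrot := SimpleGraph.Walk.support_rotate c u hu
      have : y ∈ c.support.tail := hrot.mem_iff.mp hy
      exact hmax y (List.mem_of_mem_tail this)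
  obtain ⟨s, h₁, d, hd⟩ := SimpleGraph.Walk.not_nil_iff.mp hc'.not_nil
  obtain ⟨t, q, h₂, heq⟩ := SimpleGraph.Walk.exists_cons_eq_concat h₁ d
  have hs_mem : s ∈ c'.support := by
    rw [hd, SimpleGraph.Walk.support_cons]
    exact List.mem_cons_of_mem _ (SimpleGraph.Walk.start_mem_support _)
  have ht_mem : t ∈ c'.support := by
    rw [hd, heq, SimpleGraph.Walk.concat_eq_append]
    exact SimpleGraph.Walk.subset_support_append_left _ _
      (SimpleGraph.Walk.end_mem_support q)
  have hPs : C.P u = s := by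
    rcases h₁.2 with h | h
    · exact h
    · exfalso
      have hsr : s ≠ ↑C.r := by
        rintro rfl
        rw [C.P_root] at h
        exact h₁.1 h.symm
      have := C.rk_lt hsr
      rw [h] at this
      have := hmax' s hs_mem
      omega
  have hPt : C.P u = t := by
    rcases h₂.2 with h | h
    · exfalso
      have htr : t ≠ ↑C.r := by
        rintro rfl
        rw [C.P_root] at h
        exact h₂.1 h
      have := C.rk_lt htr
      rw [h] at this
      have := hmax' t ht_mem
      omega
    · exact h
  have hst : s = t := by rw [← hPs, hPt]
  have hedges : s(u, s) :: d.edges = q.edges ++ [s(t, u)] := by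
    have h9 := congrArg SimpleGraph.Walk.edges heq
    rw [SimpleGraph.Walk.edges_cons, SimpleGraph.Walk.concat_eq_append,
      SimpleGraph.Walk.edges_append, SimpleGraph.Walk.edges_cons,
      SimpleGraph.Walk.edges_nil] at h9
    exact h9
  have hnodup : (s(u, s) :: d.edges).Nodup := by
    have h9 := hc'.edges_nodup
    rw [hd, SimpleGraph.Walk.edges_cons] at h9
    exact h9
  have hlen : 3 ≤ c'.length := hc'.three_le_length
  have hqne : q.edges ≠ [] := by
    intro hq
    rw [hq, List.nil_append] at hedges
    have hde : d.edges = [] := (List.cons_eq_cons.mp hedges).2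
    have hlc : c'.length = 1 := by
      rw [hd]
      have h4 : d.length = 0 := by rw [← SimpleGraph.Walk.length_edges, hde]; rfl
      rw [SimpleGraph.Walk.length_cons, h4]
    omega
  obtain ⟨e₀, qrest, hq⟩ := List.exists_cons_of_ne_nil hqne
  rw [hq, List.cons_append] at hedges
  have h5 : d.edges = qrest ++ [s(t, u)] := (List.cons_eq_cons.mp hedges).2
  have h6 : s(t, u) ∈ d.edges := by
    rw [h5]
    simp
  have h7 : s(u, s) = s(t, u) := by rw [hst]; exact Sym2.eq_swap
  rw [← h7] at h6
  exact (List.nodup_cons.mp hnodup).1 h6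

lemma T_isTree : C.T.IsTree := ⟨C.T_conn, C.T_acyclic⟩

end Ctx
end Guided

namespace Guided
namespace Ctx
variable (C : Ctx)

lemma dT_step (a : C.V) : C.T.dist a (C.P a) ≤ 1 := by
  by_cases h : C.P a = a
  · rw [h, SimpleGraph.dist_self]
    omega
  · have hadj : C.T.Adj a (C.P a) := ⟨fun hc => h hc.symm, Or.inl rfl⟩
    have := SimpleGraph.dist_le (SimpleGraph.Walk.cons hadj .nil)
    simpa using this

lemma dT_par (a : C.N) : C.T.dist ↑a ↑(C.par a) ≤ 1 := by
  have := C.dT_step ↑a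
  rwa [C.P_coe] at this

lemma dX_edge {a b : C.V} (hadj : C.T.Adj a b) : C.X.dist a b ≤ 3 := by
  have hcase : C.P a = b ∨ C.P b = a := hadj.2
  have key : ∀ x y : C.V, C.P x = y → C.X.dist x y ≤ 3 := by
    intro x y hP
    by_cases hF : x ∈ C.F
    · have : C.P x = ↑(C.par ⟨x, hF⟩) := by
        unfold P
        rw [dif_pos hF]
      rw [← hP, this]
      exact C.dX_par ⟨x, hF⟩
    · have hy : y = ↑(C.gam x) := by rw [← hP, C.P_nmem hF]
      subst hy
      have hXadj : C.X.Adj x ↑(C.gam x) := C.adj_of_mem_Lset hF (C.gam_mem x)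
      have := SimpleGraph.dist_le (SimpleGraph.Walk.cons hXadj .nil)
      simp at this
      omega
  rcases hcase with h | h
  · exact key a b h
  · rw [SimpleGraph.dist_comm]
    exact key b a h

lemma dX_le_walk {a b : C.V} (W : C.T.Walk a b) : C.X.dist a b ≤ 3 * W.length := by
  induction W with
  | nil => rw [SimpleGraph.dist_self]; omega
  | @cons x y z hadj W' ih =>
    have h1 := C.dX_edge hadj
    have h2 := C.Xconn.dist_triangle (u := x) (v := y) (w := z)
    rw [SimpleGraph.Walk.length_cons]
    omega

lemma dX_le_dT (a b : C.V) : C.X.dist a b ≤ 3 * C.T.dist a b := by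
  obtain ⟨W, hW⟩ := C.T_conn.exists_walk_length_eq_dist a b
  have := C.dX_le_walk W
  omega

/-- merging lemma (Lemma B) -/
lemma dT_merge {q m : C.N} (hm : m ∈ C.I C.r q) (Hh : ∀ z ∈ C.I m q, C.h z ≤ C.h m + 1) :
    C.T.dist ↑q ↑m ≤ 3 := by
  by_cases hqm : q = m
  · subst hqm
    rw [SimpleGraph.dist_self]
    omega
  have hhm : C.h m ≤ C.h q := C.h_mono hm
  have hhq : C.h q ≤ C.h m + 1 := Hh q (C.right_mem_I _ _)
  by_cases hcase : C.h q = C.h m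
  · -- same level : equal candidate sets
    have hcand : C.cand q = C.cand m := by
      ext y
      constructor
      · rintro ⟨hy1, hy2, hy3⟩
        rcases C.I_comparable hm hy1 with h | h
        · have := C.h_mono h
          omega
        · refine ⟨h, ?_, by omega⟩
          rintro rfl
          omega
      · rintro ⟨hy1, hy2, hy3⟩
        refine ⟨C.I_subset_left hm hy1, ?_, by omega⟩
        rintro rfl
        exact hqm (C.eq_of_mem_mem hy1 hm)
    have hpar : C.par q = C.par m := C.par_eq_of_cand_eq hcand
    have d1 := C.dT_par q
    have d2 := C.dT_par m
    have tri := C.T_conn.dist_triangle (u := (↑q : C.V)) (v := ↑(C.par q)) (w := ↑m)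
    rw [hpar] at d1 tri
    rw [SimpleGraph.dist_comm (u := ↑(C.par m)) (v := (↑m : C.V))] at tri
    omega
  · -- h q = h m + 1
    have hhq2 : C.h q = C.h m + 1 := by omega
    have hmcand : m ∈ C.cand q := ⟨hm, fun h => hqm h.symm, by omega⟩
    have hne : (C.cand q).Nonempty := ⟨m, hmcand⟩
    have hspec := C.par_spec hne
    set w := C.par q with hw
    have hmw : m ∈ C.I C.r w := hspec.2 m hmcand
    have hhw : C.h w = C.h m := by
      have h1 : C.h w < C.h q := C.h_par_lt hne
      have h2 : C.h q ≤ C.h w + 1 := C.h_le_h_par hne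
      omega
    have hcand : C.cand w = C.cand m := by
      ext y
      constructor
      · rintro ⟨hy1, hy2, hy3⟩
        rcases C.I_comparable hmw hy1 with h | h
        · have := C.h_mono h
          omega
        · refine ⟨h, ?_, by omega⟩
          rintro rfl
          omega
      · rintro ⟨hy1, hy2, hy3⟩
        refine ⟨C.I_subset_left hmw hy1, ?_, by omega⟩
        rintro rfl
        omega
    have hpar : C.par w = C.par m := C.par_eq_of_cand_eq hcand
    have d1 := C.dT_par q
    rw [← hw] at d1
    have d2 := C.dT_par w
    have d3 := C.dT_par m
    rw [hpar] at d2
    have tri1 := C.T_conn.dist_triangle (u := (↑q : C.V)) (v := ↑w) (w := ↑(C.par m))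
    have tri2 := C.T_conn.dist_triangle (u := (↑q : C.V)) (v := ↑(C.par m)) (w := ↑m)
    rw [SimpleGraph.dist_comm (u := ↑(C.par m)) (v := (↑m : C.V))] at tri2
    omega

/-- two points in a common guide set are close in `T` -/
lemma dT_common (x : C.V) {a b : C.N} (ha : a ∈ C.Lset x) (hb : b ∈ C.Lset x) :
    C.T.dist ↑a ↑b ≤ 6 := by
  obtain ⟨m, hma, hmb, hIma, hImb⟩ := C.median a b
  have hsub : C.I a b ⊆ C.Lset x := C.I_subset_Lset x ha hb
  have key : ∀ (c : C.N), c ∈ C.Lset x → (∀ z ∈ C.I m c, z ∈ C.I a b) → m ∈ C.I C.r c →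
      C.T.dist ↑c ↑m ≤ 3 := by
    intro c _ hIc hmc
    apply C.dT_merge hmc
    intro z hz
    apply C.cov_extend x
    intro y hy
    exact hsub (hIc y (C.I_subset_left hz hy))
  have d1 : C.T.dist ↑a ↑m ≤ 3 := key a ha (fun z hz => hIma hz) hma
  have d2 : C.T.dist ↑b ↑m ≤ 3 := key b hb (fun z hz => hImb hz) hmb
  have tri := C.T_conn.dist_triangle (u := (↑a : C.V)) (v := ↑m) (w := ↑b)
  rw [SimpleGraph.dist_comm (u := (↑b : C.V)) (v := (↑m : C.V))] at d2
  omega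

/-- adjacent vertices of `F` are close in `T` -/
lemma dT_adj {a b : C.N} (hadj : C.Γ.Adj a b) : C.T.dist ↑a ↑b ≤ 3 := by
  obtain ⟨m, hma, hmb, hIma, hImb⟩ := C.median a b
  have hm_ab : m ∈ C.I a b := hIma (C.left_mem_I m a)
  have hIab : C.I a b = {a, b} := C.I_adj hadj
  rw [hIab] at hm_ab
  simp only [Set.mem_insert_iff, Set.mem_singleton_iff] at hm_ab
  rcases hm_ab with rfl | rfl
  · -- m = a
    have hmerge : C.T.dist ↑b ↑m ≤ 3 := by
      apply C.dT_merge hmb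
      intro z hz
      have hz2 : z ∈ C.I m b := hz
      have hz3 : z ∈ ({m, b} : Set C.N) := by rw [← hIab]; exact hImb hz2
      rcases hz3 with rfl | hz3
      · omega
      · rw [Set.mem_singleton_iff] at hz3
        subst hz3
        have := C.h_adj hadj
        omega
    rw [SimpleGraph.dist_comm] at hmerge
    exact hmerge
  · -- m = b
    apply C.dT_merge hma
    intro z hz
    have hz3 : z ∈ ({a, m} : Set C.N) := by rw [← hIab]; exact hIma hz
    rcases hz3 with rfl | hz3
    · have := C.h_adj hadj.symm
      omega
    · rw [Set.mem_singleton_iff] at hz3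
      subst hz3
      omega

lemma dT_pend (x : C.V) : C.T.dist x ↑(C.gam x) ≤ 1 := by
  by_cases hF : x ∈ C.F
  · rw [C.gam_coe hF, SimpleGraph.dist_self]
    omega
  · have := C.dT_step x
    rwa [C.P_nmem hF] at this

lemma dT_Xedge {z z' : C.V} (hadj : C.X.Adj z z') : C.T.dist z z' ≤ 14 := by
  have hmid : C.T.dist ↑(C.gam z) ↑(C.gam z') ≤ 12 := by
    rcases C.hG.2.2 z z' hadj with ⟨h1, h2⟩ | ⟨⟨w, hw1, hw2⟩, -⟩
    · have hΓ : C.Γ.Adj ⟨z, h1⟩ ⟨z', h2⟩ := hadj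
      have hd : C.T.dist z z' ≤ 3 := C.dT_adj hΓ
      have e1 : (↑(C.gam z) : C.V) = z := C.gam_coe h1
      have e2 : (↑(C.gam z') : C.V) = z' := C.gam_coe h2
      rw [e1, e2]
      omega
    · set wF : C.N := ⟨w, C.guideSet_sub z hw1⟩ with hwF
      have d1 : C.T.dist ↑(C.gam z) ↑wF ≤ 6 := C.dT_common z (C.gam_mem z) hw1
      have d2 : C.T.dist ↑wF ↑(C.gam z') ≤ 6 := by
        have := C.dT_common z' (a := wF) (b := C.gam z') hw2 (C.gam_mem z')
        exact this
      have tri := C.T_conn.dist_triangle (u := (↑(C.gam z) : C.V)) (v := ↑wF)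
        (w := ↑(C.gam z'))
      omega
  have p1 := C.dT_pend z
  have p2 := C.dT_pend z'
  have tri1 := C.T_conn.dist_triangle (u := z) (v := ↑(C.gam z)) (w := z')
  have tri2 := C.T_conn.dist_triangle (u := (↑(C.gam z) : C.V)) (v := ↑(C.gam z')) (w := z')
  rw [SimpleGraph.dist_comm (u := ↑(C.gam z')) (v := z')] at tri2
  omega

lemma dT_le_walk {a b : C.V} (W : C.X.Walk a b) : C.T.dist a b ≤ 14 * W.length := by
  induction W with
  | nil => rw [SimpleGraph.dist_self]; omega
  | @cons x y z hadj W' ih =>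
    have h1 := C.dT_Xedge hadj
    have h2 := C.T_conn.dist_triangle (u := x) (v := y) (w := z)
    rw [SimpleGraph.Walk.length_cons]
    omega

lemma dT_le_dX (a b : C.V) : C.T.dist a b ≤ 14 * C.X.dist a b := by
  obtain ⟨W, hW⟩ := C.Xconn.exists_walk_length_eq_dist a b
  have := C.dT_le_walk W
  omega

end Ctx
end Guided

theorem guided_over_tree_is_quasiTree :
    ∃ lam eps : ℝ, 1 ≤ lam ∧ 0 ≤ eps ∧
      ∀ (V : Type u) (X : SimpleGraph V) (F : Set V),
        IsGuided X F → (X.induce F).IsTree →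
          ∃ (W : Type u) (T : SimpleGraph W) (f : V → W), T.IsTree ∧
            (∀ x y : V,
              (1 / lam) * (X.dist x y : ℝ) - eps ≤ (T.dist (f x) (f y) : ℝ) ∧
              (T.dist (f x) (f y) : ℝ) ≤ lam * (X.dist x y : ℝ) + eps) ∧
            (∀ w : W, ∃ x : V, (T.dist (f x) w : ℝ) ≤ eps) := by
  refine ⟨14, 2, by norm_num, by norm_num, ?_⟩
  intro V X F hG hT
  let C : Guided.Ctx := ⟨V, X, F, hG, hT⟩
  refine ⟨V, C.T, id, C.T_isTree, ?_, ?_⟩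
  · intro x y
    have h1 := C.dT_le_dX x y
    have h2 := C.dX_le_dT x y
    have h1' : (C.T.dist x y : ℝ) ≤ 14 * (X.dist x y : ℝ) := by exact_mod_cast h1
    have h2' : (X.dist x y : ℝ) ≤ 3 * (C.T.dist x y : ℝ) := by exact_mod_cast h2
    have hTnn : (0 : ℝ) ≤ (C.T.dist x y : ℝ) := by positivity
    constructor
    · simp only [id]
      linarith
    · simp only [id]
      linarith
  · intro w
    refine ⟨w, ?_⟩
    simp only [id]
    rw [SimpleGraph.dist_self]
    norm_num
end

section
/- Let X be a graph, F ⊆ X a connected subgraph such that X is F-guided, and Z a set of vertices of X with Z ∩ F = ∅. Then the full subgraph X − Z spanned by the vertices of X not in Z is F-guided. -/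
open SimpleGraph
open Classical

/-- The induced subgraph of an induced subgraph is isomorphic to the induced
subgraph on the image. -/
noncomputable def induceInduceIso {V : Type*} (X : SimpleGraph V) (W : Set V) (S : Set ↥W) :
    ((X.induce W).induce S) ≃g (X.induce (Subtype.val '' S)) where
  toEquiv := Equiv.Set.image Subtype.val S Subtype.val_injective
  map_rel_iff' := by
    rintro ⟨⟨a, ha⟩, haS⟩ ⟨⟨b, hb⟩, hbS⟩
    simp [Equiv.Set.image, Equiv.Set.imageOfInjOn]

/-- Connectivity of subsets transfers between an induced subgraph and the
ambient graph. -/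
lemma connSet_induce_iff {V : Type*} (X : SimpleGraph V) (W : Set V) (S : Set ↥W) :
    ConnSet (X.induce W) S ↔ ConnSet X (Subtype.val '' S) := by
  unfold ConnSet
  constructor
  · intro h
    exact h.map (induceInduceIso X W S).toHom (induceInduceIso X W S).toEquiv.surjective
  · intro h
    exact h.map (induceInduceIso X W S).symm.toHom
      (induceInduceIso X W S).symm.toEquiv.surjective

lemma guideSet_image {V : Type*} (X : SimpleGraph V) (F : Set V) (Z : Set V)
    (hZF : Z ∩ F = ∅) (x : ↥(Zᶜ)) :
    Subtype.val '' guideSet (X.induce Zᶜ) {v : ↥(Zᶜ) | (v : V) ∈ F} x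
      = guideSet X F (x : V) := by
  have hFZ : ∀ v, v ∈ F → v ∈ Zᶜ := fun v hv hvZ =>
    Set.eq_empty_iff_forall_notMem.mp hZF v ⟨hvZ, hv⟩
  by_cases h : (x : V) ∈ F
  · have hx : x ∈ {v : ↥(Zᶜ) | (v : V) ∈ F} := h
    simp [guideSet, h, hx]
  · have hx : x ∉ {v : ↥(Zᶜ) | (v : V) ∈ F} := h
    simp only [guideSet, if_neg h, if_neg hx]
    ext v
    constructor
    · rintro ⟨⟨w, hw⟩, ⟨hwF, hadj⟩, rfl⟩
      exact ⟨hwF, hadj⟩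
    · rintro ⟨hvF, hadj⟩
      exact ⟨⟨v, hFZ v hvF⟩, ⟨hvF, hadj⟩, rfl⟩

theorem guided_of_deleteVerts {V : Type*} (X : SimpleGraph V) (F : Set V) (Z : Set V)
    (hXF : IsGuided X F) (hZF : Z ∩ F = ∅) :
    IsGuided (X.induce Zᶜ) {v : ↥(Zᶜ) | (v : V) ∈ F} := by
  obtain ⟨hconn, hguide, hadj⟩ := hXF
  have hFZ : ∀ v, v ∈ F → v ∈ Zᶜ := fun v hv hvZ =>
    Set.eq_empty_iff_forall_notMem.mp hZF v ⟨hvZ, hv⟩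
  set F' : Set ↥(Zᶜ) := {v : ↥(Zᶜ) | (v : V) ∈ F} with hF'
  have himF : Subtype.val '' F' = F := by
    ext v
    constructor
    · rintro ⟨w, hw, rfl⟩; exact hw
    · intro hv; exact ⟨⟨v, hFZ v hv⟩, hv, rfl⟩
  refine ⟨?_, ?_, ?_⟩
  · rw [ConnSet, ← ConnSet, connSet_induce_iff, himF]; exact hconn
  · intro x
    have him := guideSet_image X F Z hZF x
    constructor
    · have := (hguide (x : V)).1
      rw [← him] at this
      exact (Set.image_nonempty.mp this)
    · rw [ConnSet, ← ConnSet, connSet_induce_iff, him]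
      exact (hguide (x : V)).2
  · intro x y hxy
    have hxy' : X.Adj (x : V) (y : V) := hxy
    rcases hadj (x : V) (y : V) hxy' with ⟨hxF, hyF⟩ | ⟨hne, hc⟩
    · exact Or.inl ⟨hxF, hyF⟩
    · right
      have him : Subtype.val '' (guideSet (X.induce Zᶜ) F' x ∩ guideSet (X.induce Zᶜ) F' y)
          = guideSet X F (x : V) ∩ guideSet X F (y : V) := by
        rw [Set.image_inter Subtype.val_injective, guideSet_image X F Z hZF,
          guideSet_image X F Z hZF]
      constructor
      · rw [← him] at hne
        exact Set.image_nonempty.mp hne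
      · rw [ConnSet, ← ConnSet, connSet_induce_iff, him]
        exact hc
end

section
/- Let X be a graph and F ⊆ X a connected subgraph such that X is F-guided. Let F̂ be the graph obtained from F by adding, for each vertex x of X not in F, a new vertex v_x joined by an edge to every vertex of L(x). Then the map f: F̂ → X defined by f(w) = w for w ∈ F and f(v_x) = x is a (2,0)-quasi-isometry; specifically, d_X(f(z₁), f(z₂)) ≤ d_{F̂}(z₁, z₂) ≤ 2 d_X(f(z₁), f(z₂)) for all vertices z₁, z₂ of F̂. -/
open SimpleGraph
open Classical

/-!
STATEMENT 6 (final lemma of Section 4).  Let `X` be `F`-guided and let `F̂` be the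
graph obtained from `F` by adding, for each vertex `x ∉ F`, a cone vertex `v_x`
joined to every vertex of `L(x)`.  Realizing `v_x` as the vertex `x` itself, `F̂`
is a graph on the vertex set of `X`, and the identity map `f : F̂ → X` satisfies
`d_X(f z₁, f z₂) ≤ d_{F̂}(z₁, z₂) ≤ 2·d_X(f z₁, f z₂)`; in particular it is a
`(2,0)`-quasi-isometry.
-/

/-- The graph `F̂`: edges of `X` between vertices of `F`, together with an edge from
each `x ∉ F` (playing the role of the cone vertex `v_x`) to every vertex of `L(x)`. -/
noncomputable def coneGraph {V : Type*} (X : SimpleGraph V) (F : Set V) :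
    SimpleGraph V where
  Adj a b := (a ∈ F ∧ b ∈ F ∧ X.Adj a b) ∨ (a ∉ F ∧ b ∈ guideSet X F a) ∨
    (b ∉ F ∧ a ∈ guideSet X F b)
  symm := by
    constructor
    intro a b h
    rcases h with ⟨ha, hb, hadj⟩ | h | h
    · exact Or.inl ⟨hb, ha, hadj.symm⟩
    · exact Or.inr (Or.inr h)
    · exact Or.inr (Or.inl h)
  loopless := by
    constructor
    intro a h
    rcases h with ⟨_, _, hadj⟩ | ⟨hna, hL⟩ | ⟨hna, hL⟩ <;>
    first
      | exact X.irrefl hadj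
      | · rw [guideSet, if_neg hna] at hL
          exact hna hL.1

lemma coneGraph_le {V : Type*} (X : SimpleGraph V) (F : Set V) :
    coneGraph X F ≤ X := by
  intro a b h
  rcases h with ⟨_, _, hadj⟩ | ⟨hna, hL⟩ | ⟨hnb, hL⟩
  · exact hadj
  · rw [guideSet, if_neg hna] at hL; exact hL.2
  · rw [guideSet, if_neg hnb] at hL; exact hL.2.symm

lemma coneGraph_step {V : Type*} {X : SimpleGraph V} {F : Set V}
    (hXF : IsGuided X F) {a b : V} (h : X.Adj a b) :
    ∃ w : (coneGraph X F).Walk a b, w.length ≤ 2 := by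
  rcases hXF.2.2 a b h with ⟨ha, hb⟩ | ⟨⟨w, hwa, hwb⟩, -⟩
  · exact ⟨SimpleGraph.Walk.cons (Or.inl ⟨ha, hb, h⟩) SimpleGraph.Walk.nil, Nat.le_of_ble_eq_true rfl⟩
  · by_cases ha : a ∈ F
    · rw [guideSet, if_pos ha] at hwa
      have hwa' : w = a := hwa
      subst hwa'
      by_cases hb : b ∈ F
      · rw [guideSet, if_pos hb] at hwb
        exact absurd hwb (by simpa using h.ne)
      · exact ⟨SimpleGraph.Walk.cons (Or.inr (Or.inr ⟨hb, hwb⟩))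
          SimpleGraph.Walk.nil, Nat.le_of_ble_eq_true rfl⟩
    · by_cases hb : b ∈ F
      · rw [guideSet, if_pos hb] at hwb
        have hwb' : w = b := hwb
        subst hwb'
        exact ⟨SimpleGraph.Walk.cons (Or.inr (Or.inl ⟨ha, hwa⟩))
          SimpleGraph.Walk.nil, Nat.le_of_ble_eq_true rfl⟩
      · exact ⟨SimpleGraph.Walk.cons (Or.inr (Or.inl ⟨ha, hwa⟩))
          (SimpleGraph.Walk.cons (Or.inr (Or.inr ⟨hb, hwb⟩))
            SimpleGraph.Walk.nil), Nat.le_of_ble_eq_true rfl⟩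

lemma coneGraph_walk {V : Type*} {X : SimpleGraph V} {F : Set V}
    (hXF : IsGuided X F) : ∀ {u v : V} (p : X.Walk u v),
    ∃ q : (coneGraph X F).Walk u v, q.length ≤ 2 * p.length := by
  intro u v p
  induction p with
  | nil => exact ⟨SimpleGraph.Walk.nil, by simp⟩
  | cons h p ih =>
    obtain ⟨q, hq⟩ := ih
    obtain ⟨r, hr⟩ := coneGraph_step hXF h
    refine ⟨r.append q, ?_⟩
    rw [SimpleGraph.Walk.length_append, SimpleGraph.Walk.length_cons]
    omega

theorem coneGraph_quasiIsometry {V : Type*} (X : SimpleGraph V) (F : Set V)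
    (hXF : IsGuided X F) :
    ∀ z₁ z₂ : V,
      (X.dist z₁ z₂ : ℝ) ≤ ((coneGraph X F).dist z₁ z₂ : ℝ) ∧
      ((coneGraph X F).dist z₁ z₂ : ℝ) ≤ 2 * (X.dist z₁ z₂ : ℝ) := by
  intro z₁ z₂
  by_cases hr : X.Reachable z₁ z₂
  · obtain ⟨p, hp⟩ := hr.exists_walk_length_eq_dist
    obtain ⟨q, hq⟩ := coneGraph_walk hXF p
    have hub : (coneGraph X F).dist z₁ z₂ ≤ 2 * X.dist z₁ z₂ := by
      calc (coneGraph X F).dist z₁ z₂ ≤ q.length := SimpleGraph.dist_le q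
        _ ≤ 2 * p.length := hq
        _ = 2 * X.dist z₁ z₂ := by rw [hp]
    have hrc : (coneGraph X F).Reachable z₁ z₂ := ⟨q⟩
    obtain ⟨s, hs⟩ := hrc.exists_walk_length_eq_dist
    have hlb : X.dist z₁ z₂ ≤ (coneGraph X F).dist z₁ z₂ := by
      calc X.dist z₁ z₂ ≤ (s.mapLe (coneGraph_le X F)).length :=
            SimpleGraph.dist_le _
        _ = s.length := SimpleGraph.Walk.length_map _ _
        _ = (coneGraph X F).dist z₁ z₂ := hs
    constructor
    · exact_mod_cast hlb
    · calc ((coneGraph X F).dist z₁ z₂ : ℝ) ≤ ((2 * X.dist z₁ z₂ : ℕ) : ℝ) := by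
            exact_mod_cast hub
        _ = 2 * (X.dist z₁ z₂ : ℝ) := by push_cast; ring
  · have hrc : ¬ (coneGraph X F).Reachable z₁ z₂ := fun h =>
      hr (h.mono (coneGraph_le X F))
    rw [SimpleGraph.dist_eq_zero_of_not_reachable hr,
      SimpleGraph.dist_eq_zero_of_not_reachable hrc]
    norm_num
end

section
/- Let X be a flag simplicial complex with guiding connected subgraph F such that X is F-guided, and suppose F is δ-hyperbolic and each set L(x) is K-quasiconvex in F. Then X is hyperbolic, with hyperbolicity constant depending only on δ and K. -/
open SimpleGraph
open Classical

/-!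
STATEMENT 10 (final lemma of Section 4, "moreover" clause).  Let `X` be `F`-guided.
If `F` is `δ`-hyperbolic (thin geodesic triangles, here for the induced graph on `F`)
and each guide set `L(x)` is `K`-quasiconvex in `F`, then `X` is hyperbolic, with
hyperbolicity constant depending only on `δ` and `K`.
-/

/-- A graph is `δ`-slim-hyperbolic if for every geodesic triangle (a triple of walks of
minimal length between the three vertices), every vertex of one side is within distance
`δ` of the union of the other two sides. -/
def GraphSlim {W : Type*} (G : SimpleGraph W) (δ : ℝ) : Prop :=
  ∀ x y z : W, ∀ (p : G.Walk x z) (q : G.Walk x y) (r : G.Walk y z),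
    p.length = G.dist x z → q.length = G.dist x y → r.length = G.dist y z →
    ∀ v ∈ p.support, ∃ w : W, (w ∈ q.support ∨ w ∈ r.support) ∧ (G.dist v w : ℝ) ≤ δ

/-- A set of vertices `A` of a graph `G` is `K`-quasiconvex if every geodesic (walk of
minimal length) between vertices of `A` stays in the `K`-neighborhood of `A`. -/
def GraphQuasiconvex {W : Type*} (G : SimpleGraph W) (A : Set W) (K : ℝ) : Prop :=
  ∀ a ∈ A, ∀ b ∈ A, ∀ p : G.Walk a b, p.length = G.dist a b →
    ∀ v ∈ p.support, ∃ w ∈ A, (G.dist v w : ℝ) ≤ K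

universe u


namespace GuidedAux

variable {V : Type*} {G : SimpleGraph V}


variable {V : Type*} {G : SimpleGraph V}

/-- Prefix of a walk: first `n` darts. -/
def takeW : ∀ {u v : V} (p : G.Walk u v) (n : ℕ), G.Walk u (p.getVert n)
  | _, _, Walk.nil, _ => Walk.nil
  | _, _, Walk.cons h q, 0 => Walk.nil.copy rfl ((Walk.cons h q).getVert_zero).symm
  | _, _, Walk.cons h q, (n+1) => Walk.cons h (takeW q n)

@[simp] lemma length_takeW : ∀ {u v : V} (p : G.Walk u v) (n : ℕ),
    (takeW p n).length = min n p.length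
  | _, _, Walk.nil, n => by simp [takeW]
  | _, _, Walk.cons h q, 0 => by simp [takeW]
  | _, _, Walk.cons h q, (n+1) => by
      simp [takeW, length_takeW q n, Nat.succ_min_succ]

lemma support_takeW_subset : ∀ {u v : V} (p : G.Walk u v) (n : ℕ),
    ∀ w ∈ (takeW p n).support, w ∈ p.support
  | _, _, Walk.nil, n => by simp [takeW]
  | _, _, Walk.cons h q, 0 => by simp [takeW]
  | _, _, Walk.cons h q, (n+1) => by
      intro w hw
      simp only [takeW, Walk.support_cons, List.mem_cons] at hw ⊢
      rcases hw with h1 | h2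
      · exact Or.inl rfl
      · exact Or.inr (support_takeW_subset q n w ‹_›)

lemma getVert_takeW : ∀ {u v : V} (p : G.Walk u v) (n i : ℕ),
    (takeW p n).getVert i = p.getVert (min i n)
  | _, _, Walk.nil, n, i => by
      simp [takeW, Walk.getVert_of_length_le]
  | _, _, Walk.cons h q, 0, i => by
      simp [takeW, Walk.getVert_of_length_le]
  | _, _, Walk.cons h q, (n+1), 0 => by simp [takeW]
  | _, _, Walk.cons h q, (n+1), (i+1) => by
      simp [takeW, Walk.getVert_cons_succ, getVert_takeW q n i, Nat.succ_min_succ]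

lemma length_drop : ∀ {u v : V} (p : G.Walk u v) (n : ℕ),
    (p.drop n).length = p.length - n
  | _, _, Walk.nil, n => by simp [Walk.drop]
  | _, _, Walk.cons h q, 0 => by simp [Walk.drop]
  | _, _, Walk.cons h q, (n+1) => by
      simp [Walk.drop, length_drop q n]

lemma support_drop_subset : ∀ {u v : V} (p : G.Walk u v) (n : ℕ),
    ∀ w ∈ (p.drop n).support, w ∈ p.support
  | _, _, Walk.nil, n => by simp [Walk.drop, Walk.getVert_of_length_le]
  | _, _, Walk.cons h q, 0 => by simp [Walk.drop]
  | _, _, Walk.cons h q, (n+1) => by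
      intro w hw
      simp only [Walk.drop, Walk.support_copy, Walk.support_cons, List.mem_cons] at hw ⊢
      exact Or.inr (support_drop_subset q n w hw)

lemma getVert_drop : ∀ {u v : V} (p : G.Walk u v) (n i : ℕ),
    (p.drop n).getVert i = p.getVert (n + i)
  | _, _, Walk.nil, n, i => by
      simp [Walk.drop, Walk.getVert_of_length_le]
  | _, _, Walk.cons h q, 0, i => by simp [Walk.drop]
  | _, _, Walk.cons h q, (n+1), i => by
      rw [show n + 1 + i = (n + i) + 1 by omega]
      simp [Walk.drop, Walk.getVert_cons_succ, getVert_drop q n i]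

lemma getVert_mem_support {u v : V} (p : G.Walk u v) (i : ℕ) :
    p.getVert i ∈ p.support := by
  by_cases h : i ≤ p.length
  · exact Walk.mem_support_iff_exists_getVert.mpr ⟨i, rfl, h⟩
  · rw [Walk.getVert_of_length_le p (le_of_not_ge h)]
    exact Walk.end_mem_support p



/-- Distance between vertices on a geodesic walk equals index difference. -/
lemma geo_getVert_dist (hconn : G.Connected) {x y : V} (γ : G.Walk x y)
    (hγ : γ.length = G.dist x y) {i j : ℕ} (hij : i ≤ j) (hj : j ≤ γ.length) :
    G.dist (γ.getVert i) (γ.getVert j) = j - i := by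
  have hub : ∀ (a b : ℕ), a ≤ b → b ≤ γ.length →
      G.dist (γ.getVert a) (γ.getVert b) ≤ b - a := by
    intro a b hab hb
    have hend : (γ.drop a).getVert (b - a) = γ.getVert b := by
      rw [getVert_drop]; congr 1; omega
    have hlen : (takeW (γ.drop a) (b - a)).length = b - a := by
      rw [length_takeW, length_drop]; omega
    calc G.dist (γ.getVert a) (γ.getVert b)
        ≤ ((takeW (γ.drop a) (b - a)).copy rfl hend).length := dist_le _
    _ = b - a := by rw [Walk.length_copy, hlen]
  refine le_antisymm (hub i j hij hj) ?_
  have h1 : G.dist x (γ.getVert i) ≤ i := by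
    have := hub 0 i (Nat.zero_le _) (le_trans hij hj)
    simpa using this
  have h2 : G.dist (γ.getVert j) y ≤ γ.length - j := by
    have := hub j γ.length hj le_rfl
    simpa [Walk.getVert_length] using this
  have h3 : G.dist x y ≤ G.dist x (γ.getVert i) + G.dist (γ.getVert i) (γ.getVert j)
      + G.dist (γ.getVert j) y := by
    calc G.dist x y ≤ G.dist x (γ.getVert j) + G.dist (γ.getVert j) y :=
        hconn.dist_triangle
    _ ≤ (G.dist x (γ.getVert i) + G.dist (γ.getVert i) (γ.getVert j)) + G.dist (γ.getVert j) y := by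
        exact Nat.add_le_add_right hconn.dist_triangle _
  omega

/-- Subwalk of a walk between two indices. -/
def subWalk {x y : V} (γ : G.Walk x y) (i j : ℕ) (hij : i ≤ j) :
    G.Walk (γ.getVert i) (γ.getVert (min j γ.length)) :=
  (takeW (γ.drop i) (j - i)).copy rfl (by
    rw [getVert_drop]
    rcases le_or_gt j γ.length with hc | hc
    · congr 1; omega
    · rw [Walk.getVert_of_length_le _ (by omega : γ.length ≤ i + (j - i))]
      rw [min_eq_right (le_of_lt hc)]
      exact (Walk.getVert_length γ).symm)

lemma length_subWalk {x y : V} (γ : G.Walk x y) (i j : ℕ) (hij : i ≤ j) (hj : j ≤ γ.length) :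
    (subWalk γ i j hij).length = j - i := by
  simp only [subWalk, Walk.length_copy, length_takeW, length_drop]
  omega

lemma support_subWalk_subset {x y : V} (γ : G.Walk x y) (i j : ℕ) (hij : i ≤ j) :
    ∀ w ∈ (subWalk γ i j hij).support, w ∈ γ.support := by
  intro w hw
  simp only [subWalk, Walk.support_copy] at hw
  exact support_drop_subset _ _ _ (support_takeW_subset _ _ _ hw)

/-- A "guessing geodesics" system on a graph. -/
structure GuessSys (G : SimpleGraph V) where
  sig : ∀ x y : V, G.Walk x y
  h : ℕ
  h1 : 1 ≤ h
  conn : G.Connected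
  H1 : ∀ x y : V, (x = y ∨ G.Adj x y) → ∀ u ∈ (sig x y).support, G.dist u x ≤ h
  H2 : ∀ x y m : V, ∀ u ∈ (sig x y).support,
    ∃ p, (p ∈ (sig x m).support ∨ p ∈ (sig m y).support) ∧ G.dist u p ≤ h

namespace GuessSys

variable (S : GuessSys G)

/-- The scale exponent. -/
def k0 : ℕ := 2 * Nat.log 2 (S.h + 2) + 10

/-- The stability constant. -/
def D : ℕ := S.h * (S.k0 + 4)

/-- The comparison scale. -/
def t : ℕ := 2 * S.D + 2 * S.h + 3

lemma h_le_D : S.h ≤ S.D := by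
  have := S.h1; unfold D k0; nlinarith [Nat.zero_le (Nat.log 2 (S.h + 2))]

lemma threeh_le_D : 3 * S.h ≤ S.D := by
  have := S.h1; unfold D k0; nlinarith [Nat.zero_le (Nat.log 2 (S.h + 2))]

lemma scale_le : 2 * S.t ≤ 2 ^ S.k0 := by
  have h1 := S.h1
  set h := S.h with hh
  set l := Nat.log 2 (h + 2) with hl
  have hlog : h + 2 < 2 ^ (l + 1) := Nat.lt_pow_succ_log_self (by norm_num) _
  have hlh : l ≤ h + 2 := Nat.log_le_self 2 (h + 2)
  have hpow : (2:ℕ) ^ (2 * l + 10) = 1024 * (2 ^ l) * (2 ^ l) := by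
    rw [pow_add, two_mul, pow_add]; ring
  have hP : h + 3 ≤ 2 * 2 ^ l := by
    have : (2:ℕ) ^ (l + 1) = 2 * 2 ^ l := by rw [pow_succ]; ring
    omega
  unfold t D k0
  rw [← hh, ← hl, hpow]
  nlinarith [sq_nonneg (2 ^ l : ℕ), hP, hlh]

/-- Step 1: the guessing path is within `h (k+2)` of any connecting walk of length `≤ 2^k`. -/
lemma near_any_walk : ∀ (k : ℕ) {x y : V} (W : G.Walk x y), W.length ≤ 2 ^ k →
    ∀ u ∈ (S.sig x y).support, ∃ w ∈ W.support, G.dist u w ≤ S.h * (k + 2) := by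
  intro k
  induction k with
  | zero =>
    intro x y W hW u hu
    refine ⟨x, W.start_mem_support, ?_⟩
    have hxy : x = y ∨ G.Adj x y := by
      interval_cases hWl : W.length
      · exact Or.inl (W.eq_of_length_eq_zero hWl)
      · refine Or.inr ?_
        have := W.adj_getVert_succ (i := 0) (by omega)
        rw [Walk.getVert_zero] at this
        have h2 : W.getVert 1 = y := by
          have := W.getVert_length; rw [hWl] at this; exact this
        rwa [h2] at this
    calc G.dist u x ≤ S.h := S.H1 x y hxy u hu
    _ ≤ S.h * (0 + 2) := by omega
  | succ k IH =>
    intro x y W hW u hu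
    rcases le_or_gt W.length (2 ^ k) with hle | hgt
    · obtain ⟨w, hw, hd⟩ := IH W hle u hu
      exact ⟨w, hw, le_trans hd (by nlinarith [S.h1])⟩
    · set n := 2 ^ k with hn
      set m := W.getVert n with hm
      obtain ⟨p, hp, hup⟩ := S.H2 x y m u hu
      have htri : ∀ w : V, G.dist u w ≤ G.dist u p + G.dist p w := fun w =>
        S.conn.dist_triangle
      rcases hp with hp | hp
      · -- first half
        have hlen : (takeW W n).length ≤ 2 ^ k := by
          rw [length_takeW]; omega
        obtain ⟨w, hw, hd⟩ := IH (takeW W n) hlen p hp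
        refine ⟨w, support_takeW_subset _ _ _ hw, ?_⟩
        calc G.dist u w ≤ G.dist u p + G.dist p w := htri w
        _ ≤ S.h + S.h * (k + 2) := Nat.add_le_add hup hd
        _ ≤ S.h * (k + 1 + 2) := by nlinarith [S.h1]
      · -- second half
        have hlen : (W.drop n).length ≤ 2 ^ k := by
          rw [length_drop]
          have : (2:ℕ) ^ (k+1) = 2 ^ k + 2 ^ k := by rw [pow_succ]; ring
          omega
        obtain ⟨w, hw, hd⟩ := IH (W.drop n) hlen p hp
        refine ⟨w, support_drop_subset _ _ _ hw, ?_⟩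
        calc G.dist u w ≤ G.dist u p + G.dist p w := htri w
        _ ≤ S.h + S.h * (k + 2) := Nat.add_le_add hup hd
        _ ≤ S.h * (k + 1 + 2) := by nlinarith [S.h1]

/-- Propagation of a property along a walk. -/
lemma walk_propagate {P Q : V → Prop} (hPQ : ∀ a c : V, G.Adj a c → P a → Q c → False) :
    ∀ {a b : V} (W : G.Walk a b), (∀ u ∈ W.support, P u ∨ Q u) → P a → ∀ u ∈ W.support, P u := by
  intro a b W
  induction W with
  | nil =>
    intro _ hP u hu
    rw [Walk.mem_support_nil_iff] at hu
    rwa [hu]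
  | @cons a c b hac q IHq =>
    intro hd hP u hu
    have hcsup : c ∈ (Walk.cons hac q).support := by
      simp [Walk.support_cons, q.start_mem_support]
    have hPc : P c := by
      rcases hd c hcsup with h | h
      · exact h
      · exact absurd h (fun hQ => hPQ a c hac hP hQ)
    rw [Walk.support_cons, List.mem_cons] at hu
    rcases hu with rfl | hu
    · exact hP
    · exact IHq (fun w hw => hd w (by rw [Walk.support_cons, List.mem_cons]; exact Or.inr hw))
        hPc u hu

include S in
lemma tri (a b c : V) : G.dist a c ≤ G.dist a b + G.dist b c :=
  SimpleGraph.Connected.dist_triangle S.conn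

lemma t_val : S.t = 2 * S.D + 2 * S.h + 3 := rfl

lemma D_val : S.D = S.h * S.k0 + 4 * S.h := by unfold D; ring

/-- Direction B: the guessing path lies within `D` of any geodesic. -/
lemma main_B : ∀ (L : ℕ) {x y : V} (γ : G.Walk x y), γ.length = G.dist x y →
    γ.length ≤ L → ∀ u ∈ (S.sig x y).support, ∃ w ∈ γ.support, G.dist u w ≤ S.D := by
  intro L
  induction L using Nat.strong_induction_on with
  | _ L IH =>
  intro x y γ hγ hL u hu
  rcases lt_or_eq_of_le hL with hlt | hLeq
  · exact IH γ.length hlt γ hγ le_rfl u hu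
  rcases Nat.eq_zero_or_pos L with hL0 | hLpos
  · have hxy : x = y := γ.eq_of_length_eq_zero (by omega)
    subst hxy
    exact ⟨x, γ.start_mem_support, le_trans (S.H1 x x (Or.inl rfl) u hu) S.h_le_D⟩
  have ht3 : 3 ≤ S.t := by rw [t_val]; omega
  -- dichotomy
  have dich : ∀ u' ∈ (S.sig x y).support,
      (∃ w ∈ γ.support, G.dist u' w ≤ S.D) ∨ (∀ w ∈ γ.support, S.D + 2 ≤ G.dist u' w) := by
    intro u' hu'
    obtain ⟨i₀, hi₀mem, hi₀min'⟩ := Finset.exists_min_image (Finset.range (γ.length + 1))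
      (fun i => G.dist u' (γ.getVert i)) ⟨0, by simp⟩
    have hi₀le : i₀ ≤ γ.length := Nat.lt_succ_iff.mp (Finset.mem_range.mp hi₀mem)
    have hi₀min : ∀ i ≤ γ.length, G.dist u' (γ.getVert i₀) ≤ G.dist u' (γ.getVert i) :=
      fun i hi => hi₀min' i (Finset.mem_range.mpr (Nat.lt_succ_of_le hi))
    suffices hdi : G.dist u' (γ.getVert i₀) ≤ S.D ∨ S.D + 3 ≤ G.dist u' (γ.getVert i₀) by
      rcases hdi with hgood | hbad
      · exact Or.inl ⟨γ.getVert i₀, getVert_mem_support γ i₀, hgood⟩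
      · refine Or.inr (fun w hw => ?_)
        obtain ⟨i, hiv, hile⟩ := Walk.mem_support_iff_exists_getVert.mp hw
        have := hi₀min i hile
        rw [hiv] at this
        omega
    set R := G.dist u' (γ.getVert i₀) with hR
    have hgoodOf : ∀ w ∈ γ.support, G.dist u' w ≤ S.D → R ≤ S.D := by
      intro w hw hd
      obtain ⟨iw, hiwv, hiwle⟩ := Walk.mem_support_iff_exists_getVert.mp hw
      have := hi₀min iw hiwle
      rw [hiwv] at this
      omega
    set i₁ := i₀ - S.t with hi₁
    set i₂ := min (i₀ + S.t) γ.length with hi₂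
    obtain ⟨p₁, hp₁, hup₁⟩ := S.H2 x y (γ.getVert i₁) u' hu'
    rcases hp₁ with hp₁ | hp₁
    · -- p₁ on the x-side
      rcases le_or_gt i₀ S.t with hit | hit
      · -- i₁ = 0 : the guessing set σ x x is small
        have hax : γ.getVert i₁ = x := by
          rw [hi₁, Nat.sub_eq_zero_of_le hit, Walk.getVert_zero]
        rw [hax] at hp₁
        have h1 : G.dist p₁ x ≤ S.h := S.H1 x x (Or.inl rfl) p₁ hp₁
        left
        refine hgoodOf x γ.start_mem_support ?_
        calc G.dist u' x ≤ G.dist u' p₁ + G.dist p₁ x := S.tri _ _ _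
        _ ≤ S.h + S.h := Nat.add_le_add hup₁ h1
        _ ≤ S.D := le_trans (by omega) S.threeh_le_D
      · -- prefix geodesic, use IH
        have hi₁l : i₁ < L := by omega
        have hi₁le : i₁ ≤ γ.length := by omega
        have hgeo1 : (takeW γ i₁).length = G.dist x (γ.getVert i₁) := by
          rw [length_takeW, min_eq_left hi₁le]
          have hgd := geo_getVert_dist S.conn γ hγ (Nat.zero_le i₁) hi₁le
          rw [Walk.getVert_zero] at hgd
          omega
        obtain ⟨w₁, hw₁, hpw₁⟩ := IH i₁ hi₁l (takeW γ i₁) hgeo1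
          (by rw [length_takeW]; omega) p₁ hp₁
        obtain ⟨j, hjv, hjle⟩ := Walk.mem_support_iff_exists_getVert.mp hw₁
        rw [length_takeW] at hjle
        have hj : j ≤ i₁ := le_trans hjle (min_le_left _ _)
        rw [getVert_takeW, min_eq_left hj] at hjv
        have hd0 : G.dist (γ.getVert j) (γ.getVert i₀) = i₀ - j :=
          geo_getVert_dist S.conn γ hγ (by omega) hi₀le
        have h5 : i₀ - j ≤ (S.h + S.D) + R := by
          calc i₀ - j = G.dist (γ.getVert j) (γ.getVert i₀) := hd0.symm
          _ ≤ G.dist (γ.getVert j) u' + G.dist u' (γ.getVert i₀) := S.tri _ _ _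
          _ = G.dist u' (γ.getVert j) + R := by rw [SimpleGraph.dist_comm, hR]
          _ ≤ (G.dist u' p₁ + G.dist p₁ (γ.getVert j)) + R :=
            Nat.add_le_add_right (S.tri _ _ _) _
          _ ≤ (S.h + S.D) + R := by
            rw [hjv]
            exact Nat.add_le_add_right (Nat.add_le_add hup₁ hpw₁) _
        right
        have := S.t_val
        omega
    · -- p₁ on the y-side, split again at i₂
      obtain ⟨p₂, hp₂, hpp₂⟩ := S.H2 (γ.getVert i₁) y (γ.getVert i₂) p₁ hp₁
      have hup₂ : G.dist u' p₂ ≤ 2 * S.h := by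
        calc G.dist u' p₂ ≤ G.dist u' p₁ + G.dist p₁ p₂ := S.tri _ _ _
        _ ≤ 2 * S.h := by omega
      rcases hp₂ with hp₂ | hp₂
      · -- middle segment
        have hi₁₂ : i₁ ≤ i₂ := by omega
        have hi₂le : i₂ ≤ γ.length := by omega
        have hsubend : γ.getVert (min i₂ γ.length) = γ.getVert i₂ := by
          rw [min_eq_left hi₂le]
        have hlen : ((subWalk γ i₁ i₂ hi₁₂).copy rfl hsubend).length ≤ 2 ^ S.k0 := by
          rw [Walk.length_copy, length_subWalk γ i₁ i₂ hi₁₂ hi₂le]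
          have := S.scale_le
          have := S.t_val
          omega
        obtain ⟨w, hw, hdw⟩ := S.near_any_walk S.k0 ((subWalk γ i₁ i₂ hi₁₂).copy rfl hsubend)
          hlen p₂ hp₂
        rw [Walk.support_copy] at hw
        left
        refine hgoodOf w (support_subWalk_subset γ i₁ i₂ hi₁₂ w hw) ?_
        have hDval := S.D_val
        calc G.dist u' w ≤ G.dist u' p₂ + G.dist p₂ w := S.tri _ _ _
        _ ≤ 2 * S.h + S.h * (S.k0 + 2) := Nat.add_le_add hup₂ hdw
        _ ≤ S.D := by nlinarith
      · -- suffix side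
        rcases le_or_gt γ.length (i₀ + S.t) with hby | hby
        · -- i₂ = length : σ y y is small
          have hby2 : γ.getVert i₂ = y := by
            rw [hi₂, min_eq_right (by omega), Walk.getVert_length]
          rw [hby2] at hp₂
          have h1 : G.dist p₂ y ≤ S.h := S.H1 y y (Or.inl rfl) p₂ hp₂
          left
          refine hgoodOf y γ.end_mem_support ?_
          calc G.dist u' y ≤ G.dist u' p₂ + G.dist p₂ y := S.tri _ _ _
          _ ≤ 2 * S.h + S.h := by omega
          _ ≤ S.D := le_trans (by omega) S.threeh_le_D
        · -- proper suffix, use IH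
          have hi₂v : i₂ = i₀ + S.t := by omega
          have hsuf : i₂ < γ.length := by omega
          have hlen2 : (γ.drop i₂).length = γ.length - i₂ := length_drop γ i₂
          have hgeo2 : (γ.drop i₂).length = G.dist (γ.getVert i₂) y := by
            rw [hlen2]
            have hgd := geo_getVert_dist S.conn γ hγ (le_of_lt hsuf) le_rfl
            rw [Walk.getVert_length] at hgd
            omega
          obtain ⟨w₂, hw₂, hpw₂⟩ := IH (γ.length - i₂) (by omega) (γ.drop i₂) hgeo2
            (by omega) p₂ hp₂
          obtain ⟨j, hjv, hjle⟩ := Walk.mem_support_iff_exists_getVert.mp hw₂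
          rw [getVert_drop] at hjv
          rw [hlen2] at hjle
          have hd0 : G.dist (γ.getVert i₀) (γ.getVert (i₂ + j)) = i₂ + j - i₀ :=
            geo_getVert_dist S.conn γ hγ (by omega) (by omega)
          have h5 : i₂ + j - i₀ ≤ R + (2 * S.h + S.D) := by
            calc i₂ + j - i₀ = G.dist (γ.getVert i₀) (γ.getVert (i₂ + j)) := hd0.symm
            _ ≤ G.dist (γ.getVert i₀) u' + G.dist u' (γ.getVert (i₂ + j)) := S.tri _ _ _
            _ = R + G.dist u' (γ.getVert (i₂ + j)) := by rw [SimpleGraph.dist_comm, hR]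
            _ ≤ R + (G.dist u' p₂ + G.dist p₂ (γ.getVert (i₂ + j))) :=
              Nat.add_le_add_left (S.tri _ _ _) _
            _ ≤ R + (2 * S.h + S.D) := by
              rw [hjv]
              exact Nat.add_le_add_left (Nat.add_le_add hup₂ hpw₂) _
          right
          have := S.t_val
          omega
  -- propagate goodness along the guessing walk
  have goodx : ∃ w ∈ γ.support, G.dist x w ≤ S.D :=
    ⟨x, γ.start_mem_support, by
      have : G.dist x x = 0 := SimpleGraph.dist_self
      omega⟩
  have step : ∀ a c : V, G.Adj a c → (∃ w ∈ γ.support, G.dist a w ≤ S.D) →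
      (∀ w ∈ γ.support, S.D + 2 ≤ G.dist c w) → False := by
    rintro a c hac ⟨w, hw, hdw⟩ hbad
    have h1 : G.dist c w ≤ G.dist c a + G.dist a w := S.tri _ _ _
    have h2 : G.dist c a = 1 := dist_eq_one_iff_adj.mpr hac.symm
    have := hbad w hw
    omega
  exact walk_propagate step (S.sig x y) dich goodx u hu

/-- Direction A: any geodesic lies within `3D+1` of the guessing path. -/
lemma main_A {x y : V} (γ : G.Walk x y) (hγ : γ.length = G.dist x y) :
    ∀ v ∈ γ.support, ∃ u ∈ (S.sig x y).support, G.dist v u ≤ 3 * S.D + 1 := by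
  intro v hv
  obtain ⟨i, hiv, hile⟩ := Walk.mem_support_iff_exists_getVert.mp hv
  subst hiv
  have hjex : ∀ u : V, ∃ j, j ≤ γ.length ∧
      ∀ i' ≤ γ.length, G.dist u (γ.getVert j) ≤ G.dist u (γ.getVert i') := by
    intro u
    obtain ⟨j, hjmem, hjmin⟩ := Finset.exists_min_image (Finset.range (γ.length + 1))
      (fun i' => G.dist u (γ.getVert i')) ⟨0, by simp⟩
    exact ⟨j, Nat.lt_succ_iff.mp (Finset.mem_range.mp hjmem),
      fun i' hi' => hjmin i' (Finset.mem_range.mpr (Nat.lt_succ_of_le hi'))⟩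
  choose jf hjle hjmin using hjex
  have key : ∀ u ∈ (S.sig x y).support, G.dist u (γ.getVert (jf u)) ≤ S.D := by
    intro u hu
    obtain ⟨w, hw, hdw⟩ := S.main_B γ.length γ hγ le_rfl u hu
    obtain ⟨i', hi'v, hi'le⟩ := Walk.mem_support_iff_exists_getVert.mp hw
    have := hjmin u i' hi'le
    rw [hi'v] at this
    omega
  have jx : jf x = 0 := by
    have h0 : G.dist x (γ.getVert (jf x)) = 0 := by
      have h1 := hjmin x 0 (Nat.zero_le _)
      rw [Walk.getVert_zero] at h1
      have hxx : G.dist x x = 0 := SimpleGraph.dist_self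
      omega
    have hgd := geo_getVert_dist S.conn γ hγ (Nat.zero_le (jf x)) (hjle x)
    rw [Walk.getVert_zero] at hgd
    omega
  have jy : jf y = γ.length := by
    have h0 : G.dist y (γ.getVert (jf y)) = 0 := by
      have h1 := hjmin y γ.length le_rfl
      rw [Walk.getVert_length] at h1
      have hyy : G.dist y y = 0 := SimpleGraph.dist_self
      omega
    have hgd := geo_getVert_dist S.conn γ hγ (hjle y) le_rfl
    rw [Walk.getVert_length] at hgd
    have h2 : G.dist (γ.getVert (jf y)) y = 0 := by
      rw [SimpleGraph.dist_comm]; exact h0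
    have := hjle y
    omega
  have cross : ∀ {a b : V} (W : G.Walk a b), (∀ u ∈ W.support, u ∈ (S.sig x y).support) →
      jf a ≤ i → i ≤ jf b → ∃ u ∈ W.support, G.dist (γ.getVert i) u ≤ 3 * S.D + 1 := by
    intro a b W
    induction W with
    | @nil a0 =>
      intro hsub hai hib
      refine ⟨a0, Walk.start_mem_support _, ?_⟩
      have hk := key a0 (hsub a0 (Walk.start_mem_support _))
      have hia : i = jf a0 := le_antisymm hib hai
      rw [hia, SimpleGraph.dist_comm]
      exact le_trans hk (by omega)
    | @cons a c b hac q IHq =>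
      intro hsub hai hib
      have hasup : a ∈ (Walk.cons hac q).support := by simp [Walk.support_cons]
      have hcsup : c ∈ (Walk.cons hac q).support := by
        simp [Walk.support_cons, q.start_mem_support]
      rcases le_or_gt i (jf c) with hic | hic
      · have hka := key a (hsub a hasup)
        have hkc := key c (hsub c hcsup)
        have hjj : jf a ≤ jf c := le_trans hai hic
        have hdist : G.dist (γ.getVert (jf a)) (γ.getVert (jf c)) = jf c - jf a :=
          geo_getVert_dist S.conn γ hγ hjj (hjle c)
        have hbound : jf c - jf a ≤ 2 * S.D + 1 := by
          have hAC : G.dist a c = 1 := dist_eq_one_iff_adj.mpr hac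
          calc jf c - jf a = G.dist (γ.getVert (jf a)) (γ.getVert (jf c)) := hdist.symm
          _ ≤ G.dist (γ.getVert (jf a)) a + G.dist a (γ.getVert (jf c)) := S.tri _ _ _
          _ ≤ G.dist (γ.getVert (jf a)) a + (G.dist a c + G.dist c (γ.getVert (jf c))) :=
            Nat.add_le_add_left (S.tri _ _ _) _
          _ = G.dist a (γ.getVert (jf a)) + (G.dist a c + G.dist c (γ.getVert (jf c))) := by
            rw [SimpleGraph.dist_comm]
          _ ≤ S.D + (1 + S.D) := by
            have := hka; have := hkc; have := hAC; omega
          _ = 2 * S.D + 1 := by ring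
        have hiva : G.dist (γ.getVert (jf a)) (γ.getVert i) = i - jf a :=
          geo_getVert_dist S.conn γ hγ hai hile
        refine ⟨a, hasup, ?_⟩
        calc G.dist (γ.getVert i) a
            ≤ G.dist (γ.getVert i) (γ.getVert (jf a)) + G.dist (γ.getVert (jf a)) a :=
          S.tri _ _ _
        _ ≤ (i - jf a) + S.D := by
            have h1 : G.dist (γ.getVert i) (γ.getVert (jf a)) = i - jf a := by
              rw [SimpleGraph.dist_comm]; exact hiva
            have h2 : G.dist (γ.getVert (jf a)) a ≤ S.D := by
              rw [SimpleGraph.dist_comm]; exact hka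
            omega
        _ ≤ 3 * S.D + 1 := by omega
      · obtain ⟨u, hu, hdu⟩ := IHq
          (fun u hu => hsub u (by rw [Walk.support_cons, List.mem_cons]; exact Or.inr hu))
          (le_of_lt hic) hib
        exact ⟨u, by rw [Walk.support_cons, List.mem_cons]; exact Or.inr hu, hdu⟩
  exact cross (S.sig x y) (fun u hu => hu) (by rw [jx]; exact Nat.zero_le i)
    (by rw [jy]; exact hile)

include S in
lemma core_slim : GraphSlim G (((4 * S.D + S.h + 1 : ℕ) : ℝ)) := by
  intro x y z p q r hp hq hr v hv
  obtain ⟨u, hu, h1⟩ := S.main_A p hp v hv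
  obtain ⟨p₁, hp₁, h2⟩ := S.H2 x z y u hu
  have final : ∀ w, G.dist p₁ w ≤ S.D → G.dist v w ≤ 4 * S.D + S.h + 1 := by
    intro w h3
    calc G.dist v w ≤ G.dist v u + G.dist u w := S.tri _ _ _
    _ ≤ G.dist v u + (G.dist u p₁ + G.dist p₁ w) := Nat.add_le_add_left (S.tri _ _ _) _
    _ ≤ 4 * S.D + S.h + 1 := by omega
  rcases hp₁ with hp₁ | hp₁
  · obtain ⟨w, hw, h3⟩ := S.main_B q.length q hq le_rfl p₁ hp₁
    exact ⟨w, Or.inl hw, by exact_mod_cast final w h3⟩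
  · obtain ⟨w, hw, h3⟩ := S.main_B r.length r hr le_rfl p₁ hp₁
    exact ⟨w, Or.inr hw, by exact_mod_cast final w h3⟩

end GuessSys

section Application

variable {V : Type*} {X : SimpleGraph V} {F : Set V}

lemma induce_adj' {a b : ↥F} (h : (X.induce F).Adj a b) : X.Adj ↑a ↑b := h

/-- Lift a walk in the induced subgraph to the ambient graph. -/
def liftWalk : ∀ {a b : ↥F}, (X.induce F).Walk a b → X.Walk ↑a ↑b
  | _, _, Walk.nil => Walk.nil
  | _, _, Walk.cons h q => Walk.cons (induce_adj' h) (liftWalk q)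

lemma length_liftWalk : ∀ {a b : ↥F} (p : (X.induce F).Walk a b),
    (liftWalk p).length = p.length
  | _, _, Walk.nil => rfl
  | _, _, Walk.cons h q => by simp [liftWalk, length_liftWalk q]

lemma mem_support_liftWalk : ∀ {a b : ↥F} (p : (X.induce F).Walk a b) (w : ↥F),
    w ∈ p.support → (w : V) ∈ (liftWalk p).support
  | _, _, Walk.nil => by
      intro w hw
      rw [Walk.mem_support_nil_iff] at hw
      subst hw
      simp [liftWalk]
  | _, _, Walk.cons h q => by
      intro w hw
      simp only [liftWalk, Walk.support_cons, List.mem_cons] at hw ⊢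
      rcases hw with hw | hw
      · left; rw [hw]
      · right; exact mem_support_liftWalk q w hw

lemma support_liftWalk : ∀ {a b : ↥F} (p : (X.induce F).Walk a b),
    ∀ u ∈ (liftWalk p).support, ∃ w ∈ p.support, (w : V) = u
  | _, _, Walk.nil => by
      intro u hu
      simp only [liftWalk] at hu
      rw [Walk.mem_support_nil_iff] at hu
      exact ⟨_, Walk.start_mem_support _, hu.symm⟩
  | _, _, Walk.cons h q => by
      intro u hu
      simp only [liftWalk, Walk.support_cons, List.mem_cons] at hu ⊢
      rcases hu with hu | hu
      · exact ⟨_, Or.inl rfl, hu.symm⟩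
      · obtain ⟨w, hw, hwu⟩ := support_liftWalk q u hu
        exact ⟨w, Or.inr hw, hwu⟩

lemma dist_le_induce (hconnF : (X.induce F).Connected) (a b : ↥F) :
    X.dist ↑a ↑b ≤ (X.induce F).dist a b := by
  obtain ⟨p, hp⟩ := hconnF.exists_walk_length_eq_dist a b
  calc X.dist ↑a ↑b ≤ (liftWalk p).length := dist_le _
  _ = p.length := length_liftWalk p
  _ = _ := hp

end Application

end GuidedAux

namespace GuidedAux

lemma support_of_length_le_one {V : Type*} {G : SimpleGraph V} {x y : V}
    (W : G.Walk x y) (h : W.length ≤ 1) : ∀ u ∈ W.support, u = x ∨ u = y := by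
  intro u hu
  obtain ⟨n, hnv, hnle⟩ := SimpleGraph.Walk.mem_support_iff_exists_getVert.mp hu
  have hn1 : n ≤ 1 := le_trans hnle h
  interval_cases n
  · left; rw [← hnv, SimpleGraph.Walk.getVert_zero]
  · right; rw [← hnv, SimpleGraph.Walk.getVert_of_length_le W h]

end GuidedAux


open GuidedAux in
theorem guided_hyperbolic_of_quasiconvex_guides (δ K : ℝ) (hδ : 0 ≤ δ) (hK : 0 ≤ K) :
    ∃ δ' : ℝ, 0 ≤ δ' ∧
      ∀ (V : Type u) (X : SimpleGraph V) (F : Set V),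
        IsGuided X F →
        GraphSlim (X.induce F) δ →
        (∀ x : V, GraphQuasiconvex (X.induce F) {v : ↥F | (v : V) ∈ guideSet X F x} K) →
        GraphSlim X δ' := by
  classical
  set hh : ℕ := ⌈δ⌉₊ + ⌈K⌉₊ + 3 with hhdef
  refine ⟨((4 * (hh * (2 * Nat.log 2 (hh + 2) + 10 + 4)) + hh + 1 : ℕ) : ℝ),
    by positivity, ?_⟩
  intro V X F hg hslim hqc
  obtain ⟨hFconn, hguide, hadjp⟩ := hg
  -- basic facts about guide sets
  have hGS_F : ∀ x : V, ∀ z ∈ guideSet X F x, z ∈ F := by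
    intro x z hz
    unfold guideSet at hz
    split_ifs at hz with hxF
    · rw [Set.mem_singleton_iff] at hz; rw [hz]; exact hxF
    · exact hz.1
  have hGS_adj : ∀ x : V, ∀ z ∈ guideSet X F x, z = x ∨ X.Adj x z := by
    intro x z hz
    unfold guideSet at hz
    split_ifs at hz with hxF
    · rw [Set.mem_singleton_iff] at hz; left; exact hz
    · right; exact hz.2
  have hGS_dist : ∀ x : V, ∀ z ∈ guideSet X F x, X.dist z x ≤ 1 := by
    intro x z hz
    rcases hGS_adj x z hz with rfl | hadj
    · have : X.dist z z = 0 := SimpleGraph.dist_self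
      omega
    · have : X.dist z x = 1 := SimpleGraph.dist_eq_one_iff_adj.mpr hadj.symm
      omega
  -- projection to F
  choose π hπmem using fun x : V => (hguide x).1
  have πF : ∀ x : V, π x ∈ F := fun x => hGS_F x (π x) (hπmem x)
  have πd : ∀ x : V, X.dist (π x) x ≤ 1 := fun x => hGS_dist x (π x) (hπmem x)
  have πeq : ∀ x ∈ F, π x = x := by
    intro x hx
    have h := hπmem x
    unfold guideSet at h
    rw [if_pos hx, Set.mem_singleton_iff] at h
    exact h
  -- geodesics in F
  choose geo hgeo using fun a b : ↥F => hFconn.exists_walk_length_eq_dist a b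
  -- one-step walks
  have stepex : ∀ x : V, ∃ W : X.Walk x (π x), W.length ≤ 1 := by
    intro x
    rcases hGS_adj x (π x) (hπmem x) with he | ha
    · exact ⟨Walk.nil.copy rfl he.symm, by simp⟩
    · exact ⟨Walk.cons ha Walk.nil, by simp⟩
  choose step hstep using stepex
  -- the guessing paths
  set sig : ∀ x y : V, X.Walk x y := fun x y =>
    (step x).append ((liftWalk (geo ⟨π x, πF x⟩ ⟨π y, πF y⟩)).append (step y).reverse)
    with hsigdef
  have hsig_mem : ∀ x y u, u ∈ (sig x y).support ↔
      (u ∈ (step x).support ∨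
        u ∈ (liftWalk (geo ⟨π x, πF x⟩ ⟨π y, πF y⟩)).support ∨
        u ∈ (step y).support) := by
    intro x y u
    rw [hsigdef]
    simp [Walk.mem_support_append_iff, Walk.support_reverse, List.mem_reverse]
  have hstepcase : ∀ (x : V) (u : V), u ∈ (step x).support → u = x ∨ u = π x :=
    fun x => support_of_length_le_one (step x) (hstep x)
  have hstepdist : ∀ (x : V) (u : V), u ∈ (step x).support → X.dist u x ≤ 1 := by
    intro x u hu
    rcases hstepcase x u hu with rfl | rfl
    · have : X.dist u u = 0 := SimpleGraph.dist_self
      omega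
    · exact πd x
  -- connectivity of X
  have hXconn : X.Connected := by
    rw [SimpleGraph.connected_iff]
    refine ⟨fun x y => ⟨sig x y⟩, ?_⟩
    obtain ⟨a⟩ := hFconn.nonempty
    exact ⟨(a : V)⟩
  have tri : ∀ a b c : V, X.dist a c ≤ X.dist a b + X.dist b c :=
    fun _ _ _ => SimpleGraph.Connected.dist_triangle hXconn
  -- casting helper
  have hcast : ∀ (n : ℕ) (c : ℝ) (m : ℕ), (n : ℝ) ≤ c → c ≤ (m : ℝ) → n ≤ m := by
    intro n c m h1 h2
    exact_mod_cast le_trans h1 h2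
  have hδceil : δ ≤ (⌈δ⌉₊ : ℝ) := Nat.le_ceil δ
  have hKceil : K ≤ (⌈K⌉₊ : ℝ) := Nat.le_ceil K
  have hdind : ∀ a b : ↥F, X.dist ↑a ↑b ≤ (X.induce F).dist a b :=
    fun a b => dist_le_induce hFconn a b
  -- H1
  have H1 : ∀ x y : V, (x = y ∨ X.Adj x y) → ∀ u ∈ (sig x y).support, X.dist u x ≤ hh := by
    intro x y hxy u hu
    have hdyx : X.dist y x ≤ 1 := by
      rcases hxy with rfl | hadj
      · have : X.dist x x = 0 := SimpleGraph.dist_self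
        omega
      · have : X.dist y x = 1 := SimpleGraph.dist_eq_one_iff_adj.mpr hadj.symm
        omega
    rw [hsig_mem] at hu
    rcases hu with hu | hu | hu
    · have := hstepdist x u hu
      omega
    · -- middle segment
      obtain ⟨v, hv, rfl⟩ := support_liftWalk _ u hu
      rcases hxy with rfl | hadj
      · -- x = y : trivial geodesic
        have hlen0 : (geo ⟨π x, πF x⟩ ⟨π x, πF x⟩).length = 0 := by
          rw [hgeo]; exact SimpleGraph.dist_self
        have := support_of_length_le_one _ (by omega) v hv
        have hvx : v = (⟨π x, πF x⟩ : ↥F) := by tauto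
        have hvv : (v : V) = π x := by rw [hvx]
        rw [hvv]
        have := πd x
        omega
      · rcases hadjp x y hadj with ⟨hxF, hyF⟩ | ⟨⟨c, hcx, hcy⟩, -⟩
        · -- both endpoints in F
          have hπx : π x = x := πeq x hxF
          have hπy : π y = y := πeq y hyF
          have hFadj : (X.induce F).Adj ⟨π x, πF x⟩ ⟨π y, πF y⟩ := by
            show X.Adj (π x) (π y)
            rw [hπx, hπy]; exact hadj
          have hlen1 : (geo ⟨π x, πF x⟩ ⟨π y, πF y⟩).length = 1 := by
            rw [hgeo]; exact SimpleGraph.dist_eq_one_iff_adj.mpr hFadj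
          rcases support_of_length_le_one _ (by omega) v hv with rfl | rfl
          · show X.dist (π x) x ≤ hh
            have := πd x
            omega
          · show X.dist (π y) x ≤ hh
            have h1 := πd y
            have := tri (π y) y x
            omega
        · -- common vertex c in both guide sets
          have hcF : c ∈ F := hGS_F x c hcx
          obtain ⟨w, hw, hdw⟩ := hslim ⟨π x, πF x⟩ ⟨c, hcF⟩ ⟨π y, πF y⟩
            (geo _ _) (geo _ _) (geo _ _) (hgeo _ _) (hgeo _ _) (hgeo _ _) v hv
          have hdvw : X.dist ↑v ↑w ≤ ⌈δ⌉₊ :=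
            hcast _ δ _ (le_trans (Nat.cast_le.mpr (hdind v w)) hdw) hδceil
          rcases hw with hw | hw
          · -- w on the x-side
            obtain ⟨w', hw', hKw⟩ := hqc x ⟨π x, πF x⟩ (hπmem x) ⟨c, hcF⟩ hcx
              (geo _ _) (hgeo _ _) w hw
            have hdww' : X.dist ↑w ↑w' ≤ ⌈K⌉₊ :=
              hcast _ K _ (le_trans (Nat.cast_le.mpr (hdind w w')) hKw) hKceil
            have hw'x : X.dist ↑w' x ≤ 1 := hGS_dist x ↑w' hw'
            have t1 := tri ↑v ↑w x
            have t2 := tri ↑w ↑w' x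
            omega
          · -- w on the y-side
            obtain ⟨w', hw', hKw⟩ := hqc y ⟨c, hcF⟩ hcy ⟨π y, πF y⟩ (hπmem y)
              (geo _ _) (hgeo _ _) w hw
            have hdww' : X.dist ↑w ↑w' ≤ ⌈K⌉₊ :=
              hcast _ K _ (le_trans (Nat.cast_le.mpr (hdind w w')) hKw) hKceil
            have hw'y : X.dist ↑w' y ≤ 1 := hGS_dist y ↑w' hw'
            have t1 := tri ↑v ↑w x
            have t2 := tri ↑w ↑w' x
            have t3 := tri ↑w' y x
            omega
    · have h1 := hstepdist y u hu
      have := tri u y x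
      omega
  -- H2
  have H2 : ∀ x y m : V, ∀ u ∈ (sig x y).support,
      ∃ p, (p ∈ (sig x m).support ∨ p ∈ (sig m y).support) ∧ X.dist u p ≤ hh := by
    intro x y m u hu
    have hzero : X.dist u u = 0 := SimpleGraph.dist_self
    rw [hsig_mem] at hu
    rcases hu with hu | hu | hu
    · exact ⟨u, Or.inl ((hsig_mem x m u).mpr (Or.inl hu)), by omega⟩
    · obtain ⟨v, hv, rfl⟩ := support_liftWalk _ u hu
      obtain ⟨w, hw, hdw⟩ := hslim ⟨π x, πF x⟩ ⟨π m, πF m⟩ ⟨π y, πF y⟩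
        (geo _ _) (geo _ _) (geo _ _) (hgeo _ _) (hgeo _ _) (hgeo _ _) v hv
      have hdvw : X.dist ↑v ↑w ≤ ⌈δ⌉₊ :=
        hcast _ δ _ (le_trans (Nat.cast_le.mpr (hdind v w)) hdw) hδceil
      rcases hw with hw | hw
      · refine ⟨↑w, Or.inl ((hsig_mem x m ↑w).mpr (Or.inr (Or.inl ?_))), by omega⟩
        exact mem_support_liftWalk _ _ hw
      · refine ⟨↑w, Or.inr ((hsig_mem m y ↑w).mpr (Or.inr (Or.inl ?_))), by omega⟩
        exact mem_support_liftWalk _ _ hw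
    · exact ⟨u, Or.inr ((hsig_mem m y u).mpr (Or.inr (Or.inr hu))), by omega⟩
  -- assemble the guessing system and conclude
  have hhh1 : 1 ≤ hh := by omega
  let S : GuessSys X := ⟨sig, hh, hhh1, hXconn, H1, H2⟩
  have hs := S.core_slim
  exact hs
end

section
/- Let X and Y be geodesic metric spaces and f: X → Y a (λ, ε)-quasi-isometry. If X is δ-hyperbolic, then Y is δ'-hyperbolic for some δ' depending only on δ, λ, and ε. In particular, a geodesic metric space quasi-isometric to a tree is hyperbolic. -/
/-!
STATEMENT 11.  If `X` and `Y` are geodesic metric spaces, `f : X → Y` is a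
`(λ, ε)`-quasi-isometry, and `X` is `δ`-hyperbolic (every side of a geodesic triangle
lies in the `δ`-neighborhood of the union of the other two sides), then `Y` is
`δ'`-hyperbolic for some `δ'` depending only on `δ`, `λ` and `ε`.  In particular a
geodesic metric space quasi-isometric to a tree (a `0`-hyperbolic geodesic space)
is hyperbolic.
-/

/-- `g` is (the image of) a geodesic from `x` to `y`. -/
def IsGeodesicSeg {Z : Type*} [MetricSpace Z] (x y : Z) (g : Set Z) : Prop :=
  ∃ f : ℝ → Z, f 0 = x ∧ f (dist x y) = y ∧
    (∀ s ∈ Set.Icc (0 : ℝ) (dist x y), ∀ t ∈ Set.Icc (0 : ℝ) (dist x y),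
      dist (f s) (f t) = |s - t|) ∧
    g = f '' Set.Icc (0 : ℝ) (dist x y)

/-- A geodesic metric space: any two points are joined by a geodesic. -/
def IsGeodesicSpace (Z : Type*) [MetricSpace Z] : Prop :=
  ∀ x y : Z, ∃ g : Set Z, IsGeodesicSeg x y g

/-- `δ`-hyperbolicity via thin (slim) triangles: each side of every geodesic triangle is
contained in the `δ`-neighborhood of the union of the other two sides. -/
def SlimTriangles (Z : Type*) [MetricSpace Z] (δ : ℝ) : Prop :=
  ∀ x y z : Z, ∀ gxy gyz gxz : Set Z,
    IsGeodesicSeg x y gxy → IsGeodesicSeg y z gyz → IsGeodesicSeg x z gxz →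
    ∀ p ∈ gxz, ∃ q ∈ gxy ∪ gyz, dist p q ≤ δ

section Helpers

variable {X : Type*} [MetricSpace X]

/-- Pull the parametrization out of a geodesic space. -/
lemma exists_geo (hX : IsGeodesicSpace X) (a b : X) :
    ∃ φ : ℝ → X, φ 0 = a ∧ φ (dist a b) = b ∧
      (∀ s ∈ Set.Icc (0:ℝ) (dist a b), ∀ t ∈ Set.Icc (0:ℝ) (dist a b),
        dist (φ s) (φ t) = |s - t|) ∧
      IsGeodesicSeg a b (φ '' Set.Icc (0:ℝ) (dist a b)) := by
  obtain ⟨g, φ, h0, hL, hiso, himg⟩ := hX a b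
  exact ⟨φ, h0, hL, hiso, φ, h0, hL, hiso, rfl⟩

/-- Dyadic subdivision: a point on a geodesic joining the ends of a chain with `≤ 2^n`
steps of size `≤ K` is within `n·δ + K` of the chain. -/
lemma chain_log_close (hX : IsGeodesicSpace X) {δ K : ℝ} (hδ : 0 ≤ δ) (hK : 0 ≤ K)
    (hslim : SlimTriangles X δ) :
    ∀ n M : ℕ, M ≤ 2 ^ n → ∀ e : ℕ → X, (∀ r < M, dist (e r) (e (r+1)) ≤ K) →
      ∀ G : Set X, IsGeodesicSeg (e 0) (e M) G → ∀ p ∈ G,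
        ∃ k ≤ M, dist p (e k) ≤ n * δ + K := by
  intro n
  induction n with
  | zero =>
    intro M hM e hstep G hG p hp
    obtain ⟨ψ, h0, hL, hiso, himg⟩ := hG
    rw [himg] at hp
    obtain ⟨s, hs, rfl⟩ := hp
    refine ⟨0, Nat.zero_le _, ?_⟩
    have h1 : dist (ψ s) (ψ 0) = |s - 0| := hiso s hs 0 ⟨le_refl _, dist_nonneg⟩
    have hd : dist (e 0) (e M) ≤ K := by
      interval_cases M
      · simpa using hK
      · simpa using hstep 0 (by norm_num)
    rw [h0] at h1
    have h2 : |s - 0| ≤ K := by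
      rw [abs_of_nonneg (by linarith [hs.1])]
      linarith [hs.2, hs.1]
    rw [h1]
    simpa using h2
  | succ n ih =>
    intro M hM e hstep G hG p hp
    set m := M / 2 with hm
    have hm1 : m ≤ 2 ^ n := by
      have : M ≤ 2 * 2 ^ n := by rw [pow_succ] at hM; linarith
      omega
    have hm2 : M - m ≤ 2 ^ n := by
      have : M ≤ 2 * 2 ^ n := by rw [pow_succ] at hM; linarith
      omega
    obtain ⟨g1, hg1⟩ := hX (e 0) (e m)
    obtain ⟨g2, hg2⟩ := hX (e m) (e M)
    obtain ⟨q, hq, hpq⟩ := hslim (e 0) (e m) (e M) g1 g2 G hg1 hg2 hG p hp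
    rcases hq with hq | hq
    · obtain ⟨k, hk, hqk⟩ := ih m hm1 e
        (fun r hr => hstep r (lt_of_lt_of_le hr (Nat.div_le_self _ _))) g1 hg1 q hq
      refine ⟨k, hk.trans (Nat.div_le_self _ _), ?_⟩
      calc dist p (e k) ≤ dist p q + dist q (e k) := dist_triangle _ _ _
        _ ≤ δ + (n * δ + K) := add_le_add hpq hqk
        _ ≤ (↑(n+1) : ℝ) * δ + K := le_of_eq (by push_cast; ring)
    · have hmM : m ≤ M := Nat.div_le_self _ _
      obtain ⟨k, hk, hqk⟩ := ih (M - m) hm2 (fun r => e (m + r))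
        (fun r hr => by
          have : m + r < M := by omega
          simpa [Nat.add_assoc] using hstep (m + r) this)
        g2 (by simpa [Nat.add_sub_cancel' hmM] using hg2) q hq
      refine ⟨m + k, by omega, ?_⟩
      calc dist p (e (m + k)) ≤ dist p q + dist q (e (m + k)) := dist_triangle _ _ _
        _ ≤ δ + (n * δ + K) := add_le_add hpq hqk
        _ ≤ (↑(n+1) : ℝ) * δ + K := le_of_eq (by push_cast; ring)
end Helpers

section Helpers2

variable {X : Type*} [MetricSpace X]

/-- Constants for the Morse lemma bound. -/
noncomputable def QIx0 (δ lam : ℝ) : ℝ := max 1 (4*δ*(8*lam)/Real.log 2)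

noncomputable def QIB (δ lam ε₁ K : ℝ) : ℝ :=
  δ + K + δ * Real.log (QIx0 δ lam) / Real.log 2
    + δ * (2*lam + ε₁ + 4) / (QIx0 δ lam * Real.log 2)

noncomputable def QID1 (δ lam ε₁ K : ℝ) : ℝ := (4/3) * QIB δ lam ε₁ K + 3

lemma QIx0_one_le (δ lam : ℝ) : 1 ≤ QIx0 δ lam := le_max_left _ _

lemma QIx0_key (δ lam : ℝ) : 4*δ*(8*lam) ≤ QIx0 δ lam * Real.log 2 := by
  have hl2 : 0 < Real.log 2 := Real.log_pos one_lt_two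
  have := le_max_right 1 (4*δ*(8*lam)/Real.log 2)
  calc 4*δ*(8*lam) = (4*δ*(8*lam)/Real.log 2) * Real.log 2 := by field_simp
    _ ≤ QIx0 δ lam * Real.log 2 := by
        apply mul_le_mul_of_nonneg_right this hl2.le

lemma QIB_nonneg {δ lam ε₁ K : ℝ} (hδ : 0 ≤ δ) (hlam : 1 ≤ lam) (hε₁ : 0 ≤ ε₁)
    (hK : 1 ≤ K) : K ≤ QIB δ lam ε₁ K := by
  have hl2 : 0 < Real.log 2 := Real.log_pos one_lt_two
  have hx0 : (1:ℝ) ≤ QIx0 δ lam := QIx0_one_le δ lam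
  have h1 : 0 ≤ Real.log (QIx0 δ lam) := Real.log_nonneg hx0
  have h2 : 0 ≤ δ * Real.log (QIx0 δ lam) / Real.log 2 := by positivity
  have h3 : 0 ≤ δ * (2*lam + ε₁ + 4) / (QIx0 δ lam * Real.log 2) := by
    have : (0:ℝ) < QIx0 δ lam := by linarith
    have h4 : 0 ≤ 2*lam + ε₁ + 4 := by linarith
    positivity
  unfold QIB; linarith

/-- Discretization of a geodesic into steps of size at most `K`. -/
lemma discretize {ψ : ℝ → X} {d K : ℝ} (hd : 0 ≤ d) (hK : 1 ≤ K)
    (hiso : ∀ s ∈ Set.Icc (0:ℝ) d, ∀ t ∈ Set.Icc (0:ℝ) d, dist (ψ s) (ψ t) = |s - t|) :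
    ∃ (m : ℕ) (c : ℕ → X), c 0 = ψ 0 ∧ c m = ψ d ∧ (∀ r, dist (c r) (c (r+1)) ≤ K) ∧
      (∀ n, ∃ s ∈ Set.Icc (0:ℝ) d, c n = ψ s) ∧ (m:ℝ) ≤ d + 1 := by
  have hK0 : (0:ℝ) < K := by linarith
  refine ⟨⌈d / K⌉₊, fun n => ψ (min ((n:ℝ)*K) d), ?_, ?_, ?_, ?_, ?_⟩
  · norm_num [min_eq_left hd]
  · have : d ≤ (⌈d / K⌉₊ : ℝ) * K := by
      rw [← div_le_iff₀ hK0]; exact Nat.le_ceil _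
    show ψ (min ((⌈d / K⌉₊:ℝ)*K) d) = ψ d
    rw [min_eq_right this]
  · intro r
    have hmem : ∀ n : ℕ, min ((n:ℝ)*K) d ∈ Set.Icc (0:ℝ) d := by
      intro n
      constructor
      · exact le_min (by positivity) hd
      · exact min_le_right _ _
    rw [hiso _ (hmem r) _ (hmem (r+1))]
    have h1 : min ((r:ℝ)*K) d ≤ min (((r:ℕ)+1:ℝ)*K) d := by
      apply min_le_min _ le_rfl
      have : (r:ℝ) ≤ (r:ℝ)+1 := by linarith
      nlinarith
    have h2 : min (((r:ℕ)+1:ℝ)*K) d ≤ min ((r:ℝ)*K) d + K := by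
      rcases le_total ((r:ℝ)*K) d with h | h
      · rw [min_eq_left h]
        calc min (((r:ℕ)+1:ℝ)*K) d ≤ ((r:ℝ)+1)*K := by push_cast; exact min_le_left _ _
          _ = (r:ℝ)*K + K := by ring
      · rw [min_eq_right h]
        have : min (((r:ℕ)+1:ℝ)*K) d ≤ d := min_le_right _ _
        linarith
    rw [abs_sub_comm, abs_of_nonneg (by push_cast at h1 ⊢; linarith)]
    push_cast at h2 ⊢
    linarith
  · intro n
    refine ⟨min ((n:ℝ)*K) d, ⟨le_min (by positivity) hd, min_le_right _ _⟩, rfl⟩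
  · have h1 : (⌈d / K⌉₊ : ℝ) < d / K + 1 := Nat.ceil_lt_add_one (by positivity)
    have h2 : d / K ≤ d := by
      rw [div_le_iff₀ hK0]; nlinarith
    linarith

/-- Concatenation of chains. -/
lemma cat_spec {K : ℝ} (M₁ M₂ : ℕ) (c₁ c₂ : ℕ → X) (hjoin : c₁ M₁ = c₂ 0)
    (h₁ : ∀ r < M₁, dist (c₁ r) (c₁ (r+1)) ≤ K) (h₂ : ∀ r < M₂, dist (c₂ r) (c₂ (r+1)) ≤ K) :
    ∃ e : ℕ → X, e 0 = c₁ 0 ∧ e (M₁ + M₂) = c₂ M₂ ∧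
      (∀ r < M₁ + M₂, dist (e r) (e (r+1)) ≤ K) ∧
      (∀ k ≤ M₁ + M₂, (∃ r ≤ M₁, e k = c₁ r) ∨ (∃ r ≤ M₂, e k = c₂ r)) := by
  refine ⟨fun n => if n ≤ M₁ then c₁ n else c₂ (n - M₁), by simp, ?_, ?_, ?_⟩
  · rcases Nat.eq_zero_or_pos M₂ with h | h
    · subst h; simp [hjoin]
    · have : ¬ (M₁ + M₂ ≤ M₁) := by omega
      simp only [this, if_false]
      congr 1
      omega
  · intro r hr
    by_cases h1 : r + 1 ≤ M₁
    · simp only [show r ≤ M₁ by omega, if_true, h1]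
      exact h₁ r (by omega)
    · by_cases h2 : r ≤ M₁
      · show dist (if r ≤ M₁ then c₁ r else c₂ (r - M₁))
            (if r + 1 ≤ M₁ then c₁ (r+1) else c₂ (r + 1 - M₁)) ≤ K
        rw [if_pos h2, if_neg h1, show r + 1 - M₁ = 1 from by omega,
          show r = M₁ from by omega, hjoin]
        exact h₂ 0 (by omega)
      · show dist (if r ≤ M₁ then c₁ r else c₂ (r - M₁))
            (if r + 1 ≤ M₁ then c₁ (r+1) else c₂ (r + 1 - M₁)) ≤ K
        rw [if_neg h2, if_neg h1, show r + 1 - M₁ = (r - M₁) + 1 from by omega]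
        exact h₂ (r - M₁) (by omega)
  · intro k hk
    by_cases h : k ≤ M₁
    · exact Or.inl ⟨k, h, by simp [h]⟩
    · exact Or.inr ⟨k - M₁, by omega, by simp [h]⟩

/-- Monotone subchain between two chain indices. -/
lemma mid_spec {K lam ε₁ : ℝ} (x : ℕ → X) (N : ℕ)
    (hstep : ∀ r < N, dist (x r) (x (r+1)) ≤ K)
    (hlow : ∀ i j, i ≤ j → j ≤ N → (j : ℝ) - (i:ℝ) ≤ lam * dist (x i) (x j) + ε₁)
    (i j : ℕ) (hi : i ≤ N) (hj : j ≤ N) :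
    ∃ (mm : ℕ) (c : ℕ → X), c 0 = x i ∧ c mm = x j ∧
      (∀ r < mm, dist (c r) (c (r+1)) ≤ K) ∧
      (∀ r ≤ mm, ∃ k ≤ N, c r = x k) ∧
      ((mm:ℝ) ≤ lam * dist (x i) (x j) + ε₁) := by
  rcases le_total i j with hij | hij
  · refine ⟨j - i, fun r => x (min (i + r) j), by simp [min_eq_left hij], ?_, ?_, ?_, ?_⟩
    · show x (min (i + (j - i)) j) = x j
      rw [show i + (j - i) = j from by omega, min_self]
    · intro r hr
      have e1 : min (i + r) j = i + r := by omega
      have e2 : min (i + (r+1)) j = (i + r) + 1 := by omega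
      show dist (x (min (i + r) j)) (x (min (i + (r+1)) j)) ≤ K
      rw [e1, e2]
      exact hstep (i + r) (by omega)
    · intro r _
      exact ⟨min (i + r) j, by omega, rfl⟩
    · have : ((j - i : ℕ) : ℝ) = (j:ℝ) - i := by
        push_cast [Nat.cast_sub hij]; ring
      rw [this]
      exact hlow i j hij hj
  · refine ⟨i - j, fun r => x (max (i - r) j), by simp [max_eq_left hij], ?_, ?_, ?_, ?_⟩
    · show x (max (i - (i - j)) j) = x j
      rw [show i - (i - j) = j from by omega, max_self]
    · intro r hr
      have e1 : max (i - r) j = i - r := by omega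
      have e2 : max (i - (r+1)) j = (i - r) - 1 := by omega
      show dist (x (max (i - r) j)) (x (max (i - (r+1)) j)) ≤ K
      rw [e1, e2, dist_comm]
      have e3 : ((i - r) - 1) + 1 = i - r := by omega
      rw [← e3]
      exact hstep ((i - r) - 1) (by omega)
    · intro r _
      exact ⟨max (i - r) j, by omega, rfl⟩
    · have : ((i - j : ℕ) : ℝ) = (i:ℝ) - j := by
        push_cast [Nat.cast_sub hij]; ring
      rw [this, dist_comm]
      exact hlow j i hij hi

end Helpers2

section Core

variable {X : Type*} [MetricSpace X]

set_option maxHeartbeats 1600000 in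
/-- Morse-type lemma, direction B: every point of a geodesic joining the endpoints of a
quasi-geodesic chain is uniformly close to the chain. -/
lemma lemmaB (hX : IsGeodesicSpace X) {δ lam ε₁ K : ℝ}
    (hδ : 0 ≤ δ) (hlam : 1 ≤ lam) (hε₁ : 0 ≤ ε₁) (hK : 1 ≤ K)
    (hslim : SlimTriangles X δ) (x : ℕ → X) (N : ℕ)
    (hstep : ∀ r < N, dist (x r) (x (r+1)) ≤ K)
    (hlow : ∀ i j, i ≤ j → j ≤ N → (j : ℝ) - (i:ℝ) ≤ lam * dist (x i) (x j) + ε₁)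
    (φ : ℝ → X) (hφ0 : φ 0 = x 0) (hφL : φ (dist (x 0) (x N)) = x N)
    (hiso : ∀ s ∈ Set.Icc (0:ℝ) (dist (x 0) (x N)), ∀ t ∈ Set.Icc (0:ℝ) (dist (x 0) (x N)),
      dist (φ s) (φ t) = |s - t|) :
    ∀ t ∈ Set.Icc (0:ℝ) (dist (x 0) (x N)), ∃ k ≤ N, dist (φ t) (x k) ≤ QID1 δ lam ε₁ K := by
  set L := dist (x 0) (x N) with hLdef
  set S := x '' Set.Iic N with hSdef
  have hSne : S.Nonempty := ⟨x 0, 0, Set.mem_Iic.2 (Nat.zero_le N), rfl⟩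
  have hL0 : 0 ≤ L := dist_nonneg
  have hinf_le : ∀ t ∈ Set.Icc (0:ℝ) L, Metric.infDist (φ t) S ≤ L := by
    intro t ht
    have h1 : Metric.infDist (φ t) S ≤ dist (φ t) (x 0) :=
      Metric.infDist_le_dist_of_mem ⟨0, Set.mem_Iic.2 (Nat.zero_le N), rfl⟩
    have h2 : dist (φ t) (x 0) = t := by
      rw [← hφ0, hiso t ht 0 ⟨le_rfl, hL0⟩, sub_zero, abs_of_nonneg ht.1]
    linarith [ht.2]
  set A := (fun t => Metric.infDist (φ t) S) '' Set.Icc 0 L with hAdef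
  have hAne : A.Nonempty := ⟨_, 0, ⟨le_rfl, hL0⟩, rfl⟩
  have hAbdd : BddAbove A := ⟨L, by rintro a ⟨t, ht, rfl⟩; exact hinf_le t ht⟩
  set D := sSup A with hDdef
  have hDle : ∀ t ∈ Set.Icc (0:ℝ) L, Metric.infDist (φ t) S ≤ D :=
    fun t ht => le_csSup hAbdd ⟨t, ht, rfl⟩
  have hD0 : 0 ≤ D := le_trans Metric.infDist_nonneg (hDle 0 ⟨le_rfl, hL0⟩)
  have key : D ≤ (4/3) * QIB δ lam ε₁ K + 2 := by
    obtain ⟨a, ⟨t₀, ht₀, rfl⟩, hDp⟩ := exists_lt_of_lt_csSup hAne (show D - 1 < D by linarith)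
    have hpfar : ∀ k ≤ N, D - 1 ≤ dist (φ t₀) (x k) := by
      intro k hk
      exact le_trans hDp.le (Metric.infDist_le_dist_of_mem ⟨k, hk, rfl⟩)
    -- the `u` side
    have hu : ∃ (tu : ℝ) (i : ℕ) (ψ₁ : ℝ → X),
        tu ∈ Set.Icc (0:ℝ) L ∧ tu ≤ t₀ ∧ t₀ - tu ≤ 2*D ∧ i ≤ N ∧
        ψ₁ 0 = φ tu ∧ ψ₁ (dist (φ tu) (x i)) = x i ∧
        (∀ s ∈ Set.Icc (0:ℝ) (dist (φ tu) (x i)), ∀ t' ∈ Set.Icc (0:ℝ) (dist (φ tu) (x i)),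
          dist (ψ₁ s) (ψ₁ t') = |s - t'|) ∧
        dist (φ tu) (x i) ≤ D + 1 ∧
        (∀ s ∈ Set.Icc (0:ℝ) (dist (φ tu) (x i)), D - 1 ≤ dist (φ t₀) (ψ₁ s)) := by
      rcases le_or_gt t₀ (2*D) with hcase | hcase
      · obtain ⟨ψ₁, h10, h1L, h1iso, _⟩ := exists_geo hX (φ 0) (x 0)
        have hd0 : dist (φ 0) (x 0) = 0 := by rw [hφ0, dist_self]
        refine ⟨0, 0, ψ₁, ⟨le_rfl, hL0⟩, ht₀.1, by linarith [ht₀.1], Nat.zero_le _,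
          h10, h1L, h1iso, by rw [hd0]; linarith, ?_⟩
        intro s hs
        rw [hd0] at hs
        have hs0 : s = 0 := le_antisymm hs.2 hs.1
        rw [hs0, h10, hφ0]
        exact hpfar 0 (Nat.zero_le _)
      · have htu : t₀ - 2*D ∈ Set.Icc (0:ℝ) L := ⟨by linarith, by linarith [ht₀.2]⟩
        have h1 : Metric.infDist (φ (t₀ - 2*D)) S < D + 1 :=
          lt_of_le_of_lt (hDle _ htu) (by linarith)
        obtain ⟨yp, hypS, hyp⟩ := (Metric.infDist_lt_iff hSne).1 h1
        obtain ⟨i, hiN, rfl⟩ := hypS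
        obtain ⟨ψ₁, h10, h1L, h1iso, _⟩ := exists_geo hX (φ (t₀ - 2*D)) (x i)
        have hdu : dist (φ t₀) (φ (t₀ - 2*D)) = 2*D := by
          rw [hiso t₀ ht₀ _ htu]
          rw [show t₀ - (t₀ - 2*D) = 2*D by ring, abs_of_nonneg (by linarith)]
        refine ⟨t₀ - 2*D, i, ψ₁, htu, by linarith, by linarith, hiN, h10, h1L, h1iso,
          hyp.le, ?_⟩
        intro s hs
        have h2 : dist (ψ₁ 0) (ψ₁ s) = s := by
          rw [h1iso 0 ⟨le_rfl, dist_nonneg⟩ s hs, abs_sub_comm, sub_zero,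
            abs_of_nonneg hs.1]
        have h3 := dist_triangle (φ t₀) (ψ₁ s) (ψ₁ 0)
        rw [dist_comm (ψ₁ s) (ψ₁ 0), h2, h10, hdu] at h3
        have h5 : s ≤ D + 1 := le_trans hs.2 hyp.le
        linarith
    -- the `w` side
    have hw : ∃ (tw : ℝ) (j : ℕ) (ψ₂ : ℝ → X),
        tw ∈ Set.Icc (0:ℝ) L ∧ t₀ ≤ tw ∧ tw - t₀ ≤ 2*D ∧ j ≤ N ∧
        ψ₂ 0 = x j ∧ ψ₂ (dist (x j) (φ tw)) = φ tw ∧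
        (∀ s ∈ Set.Icc (0:ℝ) (dist (x j) (φ tw)), ∀ t' ∈ Set.Icc (0:ℝ) (dist (x j) (φ tw)),
          dist (ψ₂ s) (ψ₂ t') = |s - t'|) ∧
        dist (x j) (φ tw) ≤ D + 1 ∧
        (∀ s ∈ Set.Icc (0:ℝ) (dist (x j) (φ tw)), D - 1 ≤ dist (φ t₀) (ψ₂ s)) := by
      rcases le_or_gt L (t₀ + 2*D) with hcase | hcase
      · obtain ⟨ψ₂, h20, h2L, h2iso, _⟩ := exists_geo hX (x N) (φ L)
        have hd0 : dist (x N) (φ L) = 0 := by rw [hφL, dist_self]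
        refine ⟨L, N, ψ₂, ⟨hL0, le_rfl⟩, ht₀.2, by linarith [ht₀.2], le_rfl,
          h20, h2L, h2iso, by rw [hd0]; linarith, ?_⟩
        intro s hs
        rw [hd0] at hs
        have hs0 : s = 0 := le_antisymm hs.2 hs.1
        rw [hs0, h20]
        exact hpfar N le_rfl
      · have htw : t₀ + 2*D ∈ Set.Icc (0:ℝ) L := ⟨by linarith [ht₀.1], by linarith⟩
        have h1 : Metric.infDist (φ (t₀ + 2*D)) S < D + 1 :=
          lt_of_le_of_lt (hDle _ htw) (by linarith)
        obtain ⟨yp, hypS, hyp⟩ := (Metric.infDist_lt_iff hSne).1 h1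
        obtain ⟨j, hjN, rfl⟩ := hypS
        obtain ⟨ψ₂, h20, h2L, h2iso, _⟩ := exists_geo hX (x j) (φ (t₀ + 2*D))
        have hdw : dist (φ t₀) (φ (t₀ + 2*D)) = 2*D := by
          rw [hiso t₀ ht₀ _ htw]
          rw [show t₀ - (t₀ + 2*D) = -(2*D) by ring, abs_neg, abs_of_nonneg (by linarith)]
        have hd2 : dist (x j) (φ (t₀ + 2*D)) ≤ D + 1 := by
          rw [dist_comm]; exact hyp.le
        refine ⟨t₀ + 2*D, j, ψ₂, htw, by linarith, by linarith, hjN, h20, h2L, h2iso,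
          hd2, ?_⟩
        intro s hs
        set d2 := dist (x j) (φ (t₀ + 2*D)) with hd2def
        have h2 : dist (ψ₂ s) (ψ₂ d2) = d2 - s := by
          rw [h2iso s hs d2 ⟨dist_nonneg, le_rfl⟩, abs_of_nonpos (by linarith [hs.2]),
            neg_sub]
        have h3 := dist_triangle (φ t₀) (ψ₂ s) (ψ₂ d2)
        rw [h2, h2L] at h3
        rw [hdw] at h3
        linarith [hs.1]
    obtain ⟨tu, i, ψ₁, htumem, htule, htubd, hiN, h10, h1L, h1iso, hd1le, h1far⟩ := hu
    obtain ⟨tw, j, ψ₂, htwmem, htwle, htwbd, hjN, h20, h2L, h2iso, hd2le, h2far⟩ := hw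
    obtain ⟨m₁, c₁, hc₁0, hc₁m, hc₁step, hc₁mem, hm₁⟩ := discretize dist_nonneg hK h1iso
    obtain ⟨m₂, c₂, hc₂0, hc₂m, hc₂step, hc₂mem, hm₂⟩ := discretize dist_nonneg hK h2iso
    obtain ⟨mm, cm, hcm0, hcmm, hcmstep, hcmmem, hmm⟩ := mid_spec x N hstep hlow i j hiN hjN
    obtain ⟨e₁, he₁0, he₁M, he₁step, he₁mem⟩ :=
      cat_spec m₁ mm c₁ cm (by rw [hc₁m, h1L, hcm0]) (fun r _ => hc₁step r) hcmstep
    obtain ⟨e, he0, heM, hestep, hemem⟩ :=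
      cat_spec (m₁+mm) m₂ e₁ c₂ (by rw [he₁M, hcmm, hc₂0, h20]) he₁step (fun r _ => hc₂step r)
    set M := m₁ + mm + m₂ with hMdef
    have heu : e 0 = φ tu := by rw [he0, he₁0, hc₁0, h10]
    have hew : e M = φ tw := by rw [hMdef, heM, hc₂m, h2L]
    have hefar : ∀ k ≤ M, D - 1 ≤ dist (φ t₀) (e k) := by
      intro k hk
      rcases hemem k hk with ⟨r, hr, hrE⟩ | ⟨r, hr, hrE⟩
      · rcases he₁mem r hr with ⟨r', hr', hrE'⟩ | ⟨r', hr', hrE'⟩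
        · obtain ⟨s, hs, hseq⟩ := hc₁mem r'
          rw [hrE, hrE', hseq]; exact h1far s hs
        · obtain ⟨k', hk', hkeq⟩ := hcmmem r' hr'
          rw [hrE, hrE', hkeq]; exact hpfar k' hk'
      · obtain ⟨s, hs, hseq⟩ := hc₂mem r
        rw [hrE, hseq]; exact h2far s hs
    have htuw : dist (φ tu) (φ tw) = tw - tu := by
      rw [hiso tu htumem tw htwmem, abs_sub_comm, abs_of_nonneg (by linarith)]
    have hG : IsGeodesicSeg (e 0) (e M)
        ((fun s => φ (tu + s)) '' Set.Icc 0 (dist (e 0) (e M))) := by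
      rw [heu, hew]
      refine ⟨fun s => φ (tu + s), by show φ (tu + 0) = φ tu; rw [add_zero], ?_, ?_, rfl⟩
      · rw [htuw]
        show φ (tu + (tw - tu)) = φ tw
        congr 1; ring
      · intro s hs t ht
        rw [htuw] at hs ht
        have hmem : ∀ r : ℝ, r ∈ Set.Icc (0:ℝ) (tw - tu) → tu + r ∈ Set.Icc (0:ℝ) L :=
          fun r hr => ⟨by linarith [hr.1, htumem.1], by linarith [hr.2, htwmem.2]⟩
        show dist (φ (tu + s)) (φ (tu + t)) = |s - t|
        rw [hiso _ (hmem s hs) _ (hmem t ht)]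
        congr 1; ring
    have hpmem : φ t₀ ∈ (fun s => φ (tu + s)) '' Set.Icc 0 (dist (e 0) (e M)) := by
      rw [heu, hew, htuw]
      exact ⟨t₀ - tu, ⟨by linarith, by linarith⟩, by show φ (tu + (t₀ - tu)) = φ t₀; congr 1; ring⟩
    obtain ⟨k, hkM, hkd⟩ := chain_log_close hX hδ (by linarith : (0:ℝ) ≤ K) hslim
      (Nat.clog 2 M) M (Nat.le_pow_clog one_lt_two M) e hestep _ hG (φ t₀) hpmem
    set n := Nat.clog 2 M with hndef
    have hDn : D - 1 ≤ (n:ℝ) * δ + K := le_trans (hefar k hkM) hkd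
    have hxij : dist (x i) (x j) ≤ 6*D + 2 := by
      have t1 := dist_triangle4 (x i) (φ tu) (φ tw) (x j)
      rw [htuw] at t1
      have t2 : dist (x i) (φ tu) = dist (φ tu) (x i) := dist_comm _ _
      have t3 : dist (φ tw) (x j) = dist (x j) (φ tw) := dist_comm _ _
      linarith [hd1le, hd2le]
    have hMb : (M:ℝ) ≤ 8*lam*D + (2*lam + ε₁ + 4) := by
      have hMc : (M:ℝ) = (m₁:ℝ) + mm + m₂ := by rw [hMdef]; push_cast; ring
      have hmmb : (mm:ℝ) ≤ lam*(6*D+2) + ε₁ := by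
        refine le_trans hmm ?_
        have := mul_le_mul_of_nonneg_left hxij (by linarith : (0:ℝ) ≤ lam)
        linarith
      rw [hMc]
      nlinarith [hm₁, hm₂, hd1le, hd2le, hD0, mul_nonneg (sub_nonneg.2 hlam) hD0]
    -- final arithmetic
    have hl2 : 0 < Real.log 2 := Real.log_pos one_lt_two
    have hX01 : 1 ≤ QIx0 δ lam := QIx0_one_le δ lam
    have hX0pos : 0 < QIx0 δ lam := by linarith
    have hkey : 4*δ*(8*lam) ≤ QIx0 δ lam * Real.log 2 := QIx0_key δ lam
    have hargpos : (0:ℝ) < 8*lam*D + (2*lam+ε₁+4) := by nlinarith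
    have hlogX0 : 0 ≤ Real.log (QIx0 δ lam) := Real.log_nonneg hX01
    have hlogle : Real.log (8*lam*D + (2*lam+ε₁+4)) ≤
        Real.log (QIx0 δ lam) + (8*lam*D + (2*lam+ε₁+4))/(QIx0 δ lam) := by
      have h5 := Real.log_le_sub_one_of_pos
        (show 0 < (8*lam*D + (2*lam+ε₁+4))/(QIx0 δ lam) by positivity)
      rw [Real.log_div (ne_of_gt hargpos) (ne_of_gt hX0pos)] at h5
      linarith
    have hnl : ((n:ℝ) - 1) * Real.log 2 ≤ Real.log (8*lam*D + (2*lam+ε₁+4)) := by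
      have hlognn : 0 ≤ Real.log (8*lam*D + (2*lam+ε₁+4)) :=
        Real.log_nonneg (by nlinarith)
      rcases le_or_gt M 1 with hM1 | hM1
      · have hn0 : n = 0 := by rw [hndef, Nat.clog_of_right_le_one hM1]
        rw [hn0]; push_cast; nlinarith
      · rcases Nat.eq_zero_or_pos n with hn0 | hn0
        · rw [hn0]; push_cast; nlinarith
        · have hp := Nat.pow_pred_clog_lt_self one_lt_two hM1
          have h6 : ((2:ℝ))^(n-1) < (M:ℝ) := by exact_mod_cast hp
          have h7 : Real.log ((2:ℝ)^(n-1)) ≤ Real.log (8*lam*D + (2*lam+ε₁+4)) := by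
            rw [Real.log_le_log_iff (by positivity) hargpos]
            linarith [hMb]
          rw [Real.log_pow] at h7
          have h8 : ((n - 1 : ℕ):ℝ) = (n:ℝ) - 1 := by
            rw [Nat.cast_sub hn0]; norm_num
          rw [h8] at h7
          exact h7
    -- combine
    have h9 : (D - 1 - K) * Real.log 2 ≤ (n:ℝ) * δ * Real.log 2 :=
      mul_le_mul_of_nonneg_right (by linarith) hl2.le
    have h10 : ((n:ℝ) - 1) * Real.log 2 * δ ≤ Real.log (8*lam*D + (2*lam+ε₁+4)) * δ :=
      mul_le_mul_of_nonneg_right hnl hδ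
    have h11 : δ * Real.log (8*lam*D + (2*lam+ε₁+4)) ≤
        δ * Real.log (QIx0 δ lam) + δ * ((8*lam*D + (2*lam+ε₁+4))/(QIx0 δ lam)) := by
      have := mul_le_mul_of_nonneg_left hlogle hδ
      linarith [this]
    have h12 : δ * ((8*lam*D + (2*lam+ε₁+4))/(QIx0 δ lam)) * (QIx0 δ lam) =
        δ * (8*lam*D) + δ * (2*lam+ε₁+4) := by
      field_simp
    have h13 : δ * (8*lam*D) ≤ (QIx0 δ lam * Real.log 2 / 4) * D := by
      nlinarith [hkey, hD0]
    have hBl : QIB δ lam ε₁ K * (QIx0 δ lam * Real.log 2) =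
        (δ + K) * (QIx0 δ lam * Real.log 2) + δ * Real.log (QIx0 δ lam) * QIx0 δ lam
          + δ * (2*lam+ε₁+4) := by
      unfold QIB
      field_simp
    have hfinal : (D - 2) * (3/4) * (QIx0 δ lam * Real.log 2) ≤
        QIB δ lam ε₁ K * (QIx0 δ lam * Real.log 2) := by
      rw [hBl]
      nlinarith [h9, h10, h11, h12, h13, mul_pos hX0pos hl2, hD0, hδ, hlogX0,
        mul_le_mul_of_nonneg_right h11 hX0pos.le]
    have hpos : 0 < QIx0 δ lam * Real.log 2 := mul_pos hX0pos hl2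
    have hfin2 : (D - 2) * (3/4) ≤ QIB δ lam ε₁ K := le_of_mul_le_mul_right
      (by linarith [hfinal]) hpos
    linarith
  intro t ht
  have h1 : Metric.infDist (φ t) S ≤ (4/3) * QIB δ lam ε₁ K + 2 := le_trans (hDle t ht) key
  have h2 : Metric.infDist (φ t) S < QID1 δ lam ε₁ K := by
    unfold QID1; linarith
  obtain ⟨yp, hypS, hyp⟩ := (Metric.infDist_lt_iff hSne).1 h2
  obtain ⟨k, hkN, rfl⟩ := hypS
  exact ⟨k, hkN, hyp.le⟩

end Core

section CoreA

variable {X : Type*} [MetricSpace X]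

lemma QID1_nonneg {δ lam ε₁ K : ℝ} (hδ : 0 ≤ δ) (hlam : 1 ≤ lam) (hε₁ : 0 ≤ ε₁)
    (hK : 1 ≤ K) : 1 ≤ QID1 δ lam ε₁ K := by
  have := QIB_nonneg hδ hlam hε₁ hK
  unfold QID1; linarith

noncomputable def QIA (δ lam ε₁ K : ℝ) : ℝ :=
  K * (lam*(2*QID1 δ lam ε₁ K + 1) + ε₁) + QID1 δ lam ε₁ K

lemma QIA_nonneg {δ lam ε₁ K : ℝ} (hδ : 0 ≤ δ) (hlam : 1 ≤ lam) (hε₁ : 0 ≤ ε₁)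
    (hK : 1 ≤ K) : 0 ≤ QIA δ lam ε₁ K := by
  have h1 := QID1_nonneg hδ hlam hε₁ hK
  unfold QIA
  nlinarith [mul_nonneg (by linarith : (0:ℝ) ≤ K) (by nlinarith : (0:ℝ) ≤ lam * (2*QID1 δ lam ε₁ K + 1) + ε₁)]

lemma chain_dist {K : ℝ} (x : ℕ → X) (N : ℕ)
    (hstep : ∀ r < N, dist (x r) (x (r+1)) ≤ K) :
    ∀ b ≤ N, ∀ a ≤ b, dist (x a) (x b) ≤ K * ((b:ℝ) - a) := by
  intro b
  induction b with
  | zero =>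
    intro _ a ha
    have : a = 0 := by omega
    subst this
    simp
  | succ n ih =>
    intro hn a ha
    rcases Nat.lt_or_ge a (n+1) with h | h
    · have h1 := ih (by omega) a (by omega)
      have h2 := hstep n (by omega)
      have h3 := dist_triangle (x a) (x n) (x (n+1))
      push_cast
      push_cast at h1
      linarith
    · have : a = n + 1 := by omega
      subst this
      simp
  termination_by b => b

/-- Morse-type lemma, direction A: every chain point is close to the geodesic. -/
lemma lemmaA (hX : IsGeodesicSpace X) {δ lam ε₁ K : ℝ}
    (hδ : 0 ≤ δ) (hlam : 1 ≤ lam) (hε₁ : 0 ≤ ε₁) (hK : 1 ≤ K)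
    (hslim : SlimTriangles X δ) (x : ℕ → X) (N : ℕ)
    (hstep : ∀ r < N, dist (x r) (x (r+1)) ≤ K)
    (hlow : ∀ i j, i ≤ j → j ≤ N → (j : ℝ) - (i:ℝ) ≤ lam * dist (x i) (x j) + ε₁)
    (φ : ℝ → X) (hφ0 : φ 0 = x 0) (hφL : φ (dist (x 0) (x N)) = x N)
    (hiso : ∀ s ∈ Set.Icc (0:ℝ) (dist (x 0) (x N)), ∀ t ∈ Set.Icc (0:ℝ) (dist (x 0) (x N)),
      dist (φ s) (φ t) = |s - t|) :
    ∀ k ≤ N, ∃ t ∈ Set.Icc (0:ℝ) (dist (x 0) (x N)), dist (x k) (φ t) ≤ QIA δ lam ε₁ K := by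
  set L := dist (x 0) (x N) with hLdef
  have hL0 : 0 ≤ L := dist_nonneg
  set D1 := QID1 δ lam ε₁ K with hD1def
  have hD1nn : 1 ≤ D1 := QID1_nonneg hδ hlam hε₁ hK
  have hB := lemmaB hX hδ hlam hε₁ hK hslim x N hstep hlow φ hφ0 hφL hiso
  set T := ⌈L⌉₊ with hTdef
  have hmemmin : ∀ t : ℕ, min (t:ℝ) L ∈ Set.Icc (0:ℝ) L :=
    fun t => ⟨le_min (Nat.cast_nonneg t) hL0, min_le_right _ _⟩
  have hsel : ∀ t : ℕ, ∃ k ≤ N, dist (φ (min (t:ℝ) L)) (x k) ≤ D1 :=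
    fun t => hB _ (hmemmin t)
  choose idx hidxN hidxd using hsel
  set jj : ℕ → ℕ := fun t => if t = 0 then 0 else if T + 1 ≤ t then N else idx t with hjjdef
  have hjjN : ∀ t, jj t ≤ N := by
    intro t
    rw [hjjdef]
    dsimp only
    split
    · exact Nat.zero_le _
    · split
      · exact le_rfl
      · exact hidxN t
  have hjjd : ∀ t : ℕ, dist (φ (min (t:ℝ) L)) (x (jj t)) ≤ D1 := by
    intro t
    rw [hjjdef]
    dsimp only
    by_cases h0 : t = 0
    · rw [if_pos h0, h0]
      have : min ((0:ℕ):ℝ) L = 0 := by rw [Nat.cast_zero, min_eq_left hL0]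
      rw [this, hφ0, dist_self]
      linarith
    · rw [if_neg h0]
      by_cases h1 : T + 1 ≤ t
      · rw [if_pos h1]
        have hTt : (T:ℝ) ≤ t := by exact_mod_cast (by omega : T ≤ t)
        have : min ((t:ℕ):ℝ) L = L := by
          rw [min_eq_right]
          exact le_trans (Nat.le_ceil L) hTt
        rw [this, hφL, dist_self]
        linarith
      · rw [if_neg h1]
        exact hidxd t
  have hgap : ∀ t : ℕ, dist (x (jj t)) (x (jj (t+1))) ≤ 2*D1 + 1 := by
    intro t
    have d1 := hjjd t
    have d2 := hjjd (t+1)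
    have hmid : dist (φ (min (t:ℝ) L)) (φ (min ((t+1:ℕ):ℝ) L)) ≤ 1 := by
      rw [hiso _ (hmemmin t) _ (hmemmin (t+1))]
      have hab : min ((t:ℕ):ℝ) L ≤ min ((t+1:ℕ):ℝ) L := by
        apply min_le_min _ le_rfl
        push_cast
        linarith
      have hba : min ((t+1:ℕ):ℝ) L ≤ min ((t:ℕ):ℝ) L + 1 := by
        rcases le_total ((t:ℝ)) L with h | h
        · rw [min_eq_left h]
          calc min ((t+1:ℕ):ℝ) L ≤ ((t+1:ℕ):ℝ) := min_le_left _ _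
            _ = (t:ℝ) + 1 := by push_cast; ring
        · rw [min_eq_right h]
          have : min ((t+1:ℕ):ℝ) L ≤ L := min_le_right _ _
          linarith
      rw [abs_sub_comm, abs_of_nonneg (by linarith)]
      linarith
    have t4 := dist_triangle4 (x (jj t)) (φ (min (t:ℝ) L)) (φ (min ((t+1:ℕ):ℝ) L)) (x (jj (t+1)))
    rw [dist_comm (x (jj t)) (φ (min (t:ℝ) L))] at t4
    have d2' : dist (φ (min ((t+1:ℕ):ℝ) L)) (x (jj (t+1))) ≤ D1 := d2
    linarith
  intro k hkN
  have hex : ∃ t, k ≤ jj t := by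
    refine ⟨T + 1, ?_⟩
    rw [hjjdef]
    dsimp only
    rw [if_neg (by omega), if_pos le_rfl]
    exact hkN
  rcases Nat.eq_zero_or_pos (Nat.find hex) with h0 | hpos
  · have hk0 := Nat.find_spec hex
    rw [h0] at hk0
    have : jj 0 = 0 := by rw [hjjdef]; simp
    rw [this] at hk0
    have hk00 : k = 0 := by omega
    subst hk00
    refine ⟨0, ⟨le_rfl, hL0⟩, ?_⟩
    rw [hφ0, dist_self]
    exact QIA_nonneg hδ hlam hε₁ hK
  · set s := Nat.find hex - 1 with hsdef
    have hs1 : ¬ k ≤ jj s := Nat.find_min hex (by omega)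
    have hs2 : k ≤ jj (s+1) := by
      rw [show s+1 = Nat.find hex from by omega]
      exact Nat.find_spec hex
    have horder : jj s < jj (s+1) := by omega
    have hgapR : (jj (s+1) : ℝ) - jj s ≤ lam * (2*D1+1) + ε₁ := by
      have h1 := hlow (jj s) (jj (s+1)) horder.le (hjjN _)
      have h2 := mul_le_mul_of_nonneg_left (hgap s) (by linarith : (0:ℝ) ≤ lam)
      linarith
    have hkb : (jj (s+1) : ℝ) - k ≤ lam * (2*D1+1) + ε₁ := by
      have h3 : ((jj s : ℕ):ℝ) + 1 ≤ (k:ℝ) := by exact_mod_cast (by omega : jj s + 1 ≤ k)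
      linarith
    have hda : dist (x k) (x (jj (s+1))) ≤ K * ((jj (s+1):ℝ) - k) :=
      chain_dist x N hstep (jj (s+1)) (hjjN _) k hs2
    refine ⟨min ((s+1:ℕ):ℝ) L, hmemmin (s+1), ?_⟩
    have h4 : dist (x (jj (s+1))) (φ (min ((s+1:ℕ):ℝ) L)) ≤ D1 := by
      rw [dist_comm]; exact hjjd (s+1)
    have h5 := dist_triangle (x k) (x (jj (s+1))) (φ (min ((s+1:ℕ):ℝ) L))
    have h6 : K * ((jj (s+1):ℝ) - k) ≤ K * (lam * (2*D1+1) + ε₁) :=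
      mul_le_mul_of_nonneg_left hkb (by linarith)
    rw [hD1def] at h4 h6
    unfold QIA
    linarith

end CoreA

section Transfer

variable {X : Type*} {Y : Type*} [MetricSpace X] [MetricSpace Y]

/-- Discretizing a geodesic in `Y` and mapping via a coarse inverse yields a
quasi-geodesic chain in `X`. -/
lemma side_chain {lam eps : ℝ} (hlam : 1 ≤ lam) (heps : 0 ≤ eps)
    (f : X → Y) (g : Y → X)
    (hqi : ∀ x₁ x₂ : X, (1 / lam) * dist x₁ x₂ - eps ≤ dist (f x₁) (f x₂) ∧
      dist (f x₁) (f x₂) ≤ lam * dist x₁ x₂ + eps)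
    (hg : ∀ y, dist y (f (g y)) ≤ eps)
    (a b : Y) (h : ℝ → Y) (hh0 : h 0 = a) (hhL : h (dist a b) = b)
    (hiso : ∀ s ∈ Set.Icc (0:ℝ) (dist a b), ∀ t ∈ Set.Icc (0:ℝ) (dist a b),
      dist (h s) (h t) = |s - t|)
    (c : ℕ → X) (hc : ∀ n : ℕ, c n = g (h (min (n:ℝ) (dist a b)))) :
    (∀ r < ⌈dist a b⌉₊, dist (c r) (c (r+1)) ≤ lam*(1+3*eps)) ∧
    (∀ i j : ℕ, i ≤ j → j ≤ ⌈dist a b⌉₊ →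
      (j:ℝ) - (i:ℝ) ≤ lam * dist (c i) (c j) + (3*eps+1)) ∧
    c 0 = g a ∧ c ⌈dist a b⌉₊ = g b := by
  set d := dist a b with hddef
  have hd0 : 0 ≤ d := dist_nonneg
  have hlam0 : 0 < lam := lt_of_lt_of_le one_pos hlam
  have hmem : ∀ n : ℕ, min (n:ℝ) d ∈ Set.Icc (0:ℝ) d :=
    fun n => ⟨le_min (Nat.cast_nonneg n) hd0, min_le_right _ _⟩
  have hyy : ∀ i j : ℕ, dist (h (min (i:ℝ) d)) (h (min (j:ℝ) d)) =
      |min (i:ℝ) d - min (j:ℝ) d| := fun i j => hiso _ (hmem i) _ (hmem j)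
  have hupper : ∀ i j : ℕ, dist (c i) (c j) ≤
      lam * (|min (i:ℝ) d - min (j:ℝ) d| + 3*eps) := by
    intro i j
    have h1 := (hqi (c i) (c j)).1
    have h4 : dist (f (c i)) (f (c j)) ≤ |min (i:ℝ) d - min (j:ℝ) d| + 2*eps := by
      rw [hc i, hc j]
      have t := dist_triangle4 (f (g (h (min (i:ℝ) d)))) (h (min (i:ℝ) d))
        (h (min (j:ℝ) d)) (f (g (h (min (j:ℝ) d))))
      rw [dist_comm (f (g (h (min (i:ℝ) d)))) (h (min (i:ℝ) d)), hyy i j] at t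
      linarith [hg (h (min (i:ℝ) d)), hg (h (min (j:ℝ) d))]
    have h5 : (1/lam) * dist (c i) (c j) ≤ |min (i:ℝ) d - min (j:ℝ) d| + 3*eps := by
      linarith
    have h6 := mul_le_mul_of_nonneg_left h5 hlam0.le
    rw [show lam * ((1/lam) * dist (c i) (c j)) = dist (c i) (c j) from by
      field_simp] at h6
    exact h6
  have hlower : ∀ i j : ℕ, dist (h (min (i:ℝ) d)) (h (min (j:ℝ) d)) ≤
      lam * dist (c i) (c j) + 3*eps := by
    intro i j
    have h1 := (hqi (c i) (c j)).2
    have h4 : dist (h (min (i:ℝ) d)) (h (min (j:ℝ) d)) ≤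
        dist (f (c i)) (f (c j)) + 2*eps := by
      rw [hc i, hc j]
      have t := dist_triangle4 (h (min (i:ℝ) d)) (f (g (h (min (i:ℝ) d))))
        (f (g (h (min (j:ℝ) d)))) (h (min (j:ℝ) d))
      rw [dist_comm (f (g (h (min (j:ℝ) d)))) (h (min (j:ℝ) d))] at t
      linarith [hg (h (min (i:ℝ) d)), hg (h (min (j:ℝ) d))]
    linarith
  refine ⟨?_, ?_, ?_, ?_⟩
  · intro r _
    have hdiff : |min (r:ℝ) d - min ((r+1:ℕ):ℝ) d| ≤ 1 := by
      have hab : min ((r:ℕ):ℝ) d ≤ min ((r+1:ℕ):ℝ) d := by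
        apply min_le_min _ le_rfl
        push_cast; linarith
      have hba : min ((r+1:ℕ):ℝ) d ≤ min ((r:ℕ):ℝ) d + 1 := by
        rcases le_total ((r:ℝ)) d with hcs | hcs
        · rw [min_eq_left hcs]
          calc min ((r+1:ℕ):ℝ) d ≤ ((r+1:ℕ):ℝ) := min_le_left _ _
            _ = (r:ℝ) + 1 := by push_cast; ring
        · rw [min_eq_right hcs]
          linarith [min_le_right (((r+1:ℕ)):ℝ) d]
      rw [abs_sub_comm, abs_of_nonneg (by linarith)]
      linarith
    have := hupper r (r+1)
    have h7 : lam * (|min (r:ℝ) d - min ((r+1:ℕ):ℝ) d| + 3*eps) ≤ lam * (1 + 3*eps) :=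
      mul_le_mul_of_nonneg_left (by linarith) hlam0.le
    exact le_trans (by exact_mod_cast this) h7
  · intro i j hij hjN
    have hlow1 : (j:ℝ) - i - 1 ≤ min ((j:ℕ):ℝ) d - min ((i:ℕ):ℝ) d := by
      rcases le_total ((j:ℝ)) d with hcs | hcs
      · rw [min_eq_left hcs, min_eq_left (le_trans (by exact_mod_cast hij) hcs)]
        linarith
      · rw [min_eq_right hcs]
        have hcj : (j:ℝ) ≤ (⌈d⌉₊:ℝ) := by exact_mod_cast hjN
        have hcd : (⌈d⌉₊:ℝ) < d + 1 := Nat.ceil_lt_add_one hd0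
        linarith [min_le_left ((i:ℕ):ℝ) d]
    have habs : min ((j:ℕ):ℝ) d - min ((i:ℕ):ℝ) d ≤
        |min ((i:ℕ):ℝ) d - min ((j:ℕ):ℝ) d| := by
      rw [abs_sub_comm]
      exact le_abs_self _
    have h8 := hlower i j
    rw [hyy i j] at h8
    linarith
  · rw [hc 0]
    have : min ((0:ℕ):ℝ) d = 0 := by rw [Nat.cast_zero, min_eq_left hd0]
    rw [this, hh0]
  · rw [hc ⌈d⌉₊]
    have : min ((⌈d⌉₊:ℕ):ℝ) d = d := min_eq_right (Nat.le_ceil d)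
    rw [this, hhL]

end Transfer

universe u v

theorem hyperbolic_qi_invariant (δ lam eps : ℝ) (hδ : 0 ≤ δ) (hlam : 1 ≤ lam)
    (heps : 0 ≤ eps) :
    ∃ δ' : ℝ, 0 ≤ δ' ∧
      ∀ (X : Type u) (Y : Type v) [MetricSpace X] [MetricSpace Y],
        IsGeodesicSpace X → IsGeodesicSpace Y →
        ∀ f : X → Y,
          (∀ x₁ x₂ : X,
            (1 / lam) * dist x₁ x₂ - eps ≤ dist (f x₁) (f x₂) ∧
            dist (f x₁) (f x₂) ≤ lam * dist x₁ x₂ + eps) →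
          (∀ y : Y, ∃ x : X, dist y (f x) ≤ eps) →
          SlimTriangles X δ → SlimTriangles Y δ' := by
  set ε₁ : ℝ := 3*eps + 1 with hε₁def
  set K : ℝ := lam*(1+3*eps) with hKdef
  have hε₁ : 0 ≤ ε₁ := by rw [hε₁def]; linarith
  have hK : 1 ≤ K := by rw [hKdef]; nlinarith
  set RA := QIA δ lam ε₁ K with hRAdef
  set D1 := QID1 δ lam ε₁ K with hD1def
  have hRAnn : 0 ≤ RA := QIA_nonneg hδ hlam hε₁ hK
  have hD1nn : 1 ≤ D1 := QID1_nonneg hδ hlam hε₁ hK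
  refine ⟨1 + 3*eps + lam * (RA + δ + D1), by nlinarith, ?_⟩
  intro X Y _ _ hGX hGY f hqi hsurj hslimX
  intro u v w guv gvw guw hseg1 hseg2 hseg3 p hp
  set g : Y → X := fun yy => Classical.choose (hsurj yy) with hgdef
  have hg : ∀ yy : Y, dist yy (f (g yy)) ≤ eps := fun yy => Classical.choose_spec (hsurj yy)
  obtain ⟨h₁, hh₁0, hh₁L, hh₁iso, himg₁⟩ := hseg1
  obtain ⟨h₂, hh₂0, hh₂L, hh₂iso, himg₂⟩ := hseg2
  obtain ⟨h₃, hh₃0, hh₃L, hh₃iso, himg₃⟩ := hseg3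
  set d₁ := dist u v with hd₁def
  set d₂ := dist v w with hd₂def
  set d₃ := dist u w with hd₃def
  set N₁ := ⌈d₁⌉₊ with hN₁def
  set N₂ := ⌈d₂⌉₊ with hN₂def
  set N₃ := ⌈d₃⌉₊ with hN₃def
  set c₁ : ℕ → X := fun n => g (h₁ (min (n:ℝ) d₁)) with hc₁def
  set c₂ : ℕ → X := fun n => g (h₂ (min (n:ℝ) d₂)) with hc₂def
  set c₃ : ℕ → X := fun n => g (h₃ (min (n:ℝ) d₃)) with hc₃def
  obtain ⟨hstep₁, hlow₁, hend₁0, hend₁N⟩ :=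
    side_chain hlam heps f g hqi hg u v h₁ hh₁0 hh₁L hh₁iso c₁ (fun n => rfl)
  obtain ⟨hstep₂, hlow₂, hend₂0, hend₂N⟩ :=
    side_chain hlam heps f g hqi hg v w h₂ hh₂0 hh₂L hh₂iso c₂ (fun n => rfl)
  obtain ⟨hstep₃, hlow₃, hend₃0, hend₃N⟩ :=
    side_chain hlam heps f g hqi hg u w h₃ hh₃0 hh₃L hh₃iso c₃ (fun n => rfl)
  rw [← hKdef] at hstep₁ hstep₂ hstep₃
  rw [← hε₁def] at hlow₁ hlow₂ hlow₃
  obtain ⟨φ₁, hφ₁0, hφ₁L, hφ₁iso, hGseg₁⟩ := exists_geo hGX (c₁ 0) (c₁ N₁)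
  obtain ⟨φ₂, hφ₂0, hφ₂L, hφ₂iso, hGseg₂⟩ := exists_geo hGX (c₂ 0) (c₂ N₂)
  obtain ⟨φ₃, hφ₃0, hφ₃L, hφ₃iso, hGseg₃⟩ := exists_geo hGX (c₃ 0) (c₃ N₃)
  set G₁ := φ₁ '' Set.Icc (0:ℝ) (dist (c₁ 0) (c₁ N₁)) with hG₁def
  set G₂ := φ₂ '' Set.Icc (0:ℝ) (dist (c₂ 0) (c₂ N₂)) with hG₂def
  set G₃ := φ₃ '' Set.Icc (0:ℝ) (dist (c₃ 0) (c₃ N₃)) with hG₃def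
  -- p lies on the parametrized side u-w
  rw [himg₃] at hp
  obtain ⟨t, ht, rfl⟩ := hp
  set i := ⌊t⌋₊ with hidef
  have hiN₃ : i ≤ N₃ := by
    have h1 : (⌊t⌋₊ : ℝ) ≤ t := Nat.floor_le ht.1
    have h2 : (⌊d₃⌋₊ : ℕ) ≤ ⌈d₃⌉₊ := Nat.floor_le_ceil d₃
    exact le_trans (Nat.floor_mono ht.2) h2
  have hmini : min (i:ℝ) d₃ = (i:ℝ) := by
    apply min_eq_left
    exact le_trans (Nat.floor_le ht.1) ht.2
  have hpyi : dist (h₃ t) (h₃ (min (i:ℝ) d₃)) ≤ 1 := by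
    rw [hh₃iso t ht _ ⟨le_min (Nat.cast_nonneg i) dist_nonneg, min_le_right _ _⟩, hmini]
    rw [abs_of_nonneg (by linarith [Nat.floor_le ht.1])]
    linarith [Nat.lt_floor_add_one t]
  -- step 1: chain point near the X-geodesic G₃
  obtain ⟨t₃, ht₃, hq1⟩ := lemmaA hGX hδ hlam hε₁ hK hslimX c₃ N₃ hstep₃ hlow₃
    φ₃ hφ₃0 hφ₃L hφ₃iso i hiN₃
  rw [← hRAdef] at hq1
  -- step 2: slimness in X
  have hseg₁X : IsGeodesicSeg (g u) (g v) G₁ := by rw [← hend₁0, ← hend₁N]; exact hGseg₁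
  have hseg₂X : IsGeodesicSeg (g v) (g w) G₂ := by rw [← hend₂0, ← hend₂N]; exact hGseg₂
  have hseg₃X : IsGeodesicSeg (g u) (g w) G₃ := by rw [← hend₃0, ← hend₃N]; exact hGseg₃
  obtain ⟨q2, hq2mem, hq12⟩ := hslimX (g u) (g v) (g w) G₁ G₂ G₃ hseg₁X hseg₂X hseg₃X
    (φ₃ t₃) ⟨t₃, ht₃, rfl⟩
  -- transfer distances back to Y
  have hgdist : ∀ (a b : Y), dist a b ≤ lam * dist (g a) (g b) + 3*eps := by
    intro a b
    have h1 := (hqi (g a) (g b)).2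
    have t4 := dist_triangle4 a (f (g a)) (f (g b)) b
    rw [dist_comm (f (g b)) b] at t4
    linarith [hg a, hg b]
  rcases hq2mem with hq2mem | hq2mem
  · -- q2 on the geodesic joining g u, g v
    rw [hG₁def] at hq2mem
    obtain ⟨s, hs, rfl⟩ := hq2mem
    obtain ⟨k, hkN, hq2k⟩ := lemmaB hGX hδ hlam hε₁ hK hslimX c₁ N₁ hstep₁ hlow₁
      φ₁ hφ₁0 hφ₁L hφ₁iso s hs
    rw [← hD1def] at hq2k
    refine ⟨h₁ (min (k:ℝ) d₁), Or.inl ?_, ?_⟩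
    · rw [himg₁]
      exact ⟨min (k:ℝ) d₁, ⟨le_min (Nat.cast_nonneg k) dist_nonneg, min_le_right _ _⟩, rfl⟩
    · have hxd : dist (c₃ i) (c₁ k) ≤ RA + δ + D1 := by
        have t4 := dist_triangle4 (c₃ i) (φ₃ t₃) (φ₁ s) (c₁ k)
        linarith
      have hyd : dist (h₃ (min (i:ℝ) d₃)) (h₁ (min (k:ℝ) d₁)) ≤
          lam * dist (c₃ i) (c₁ k) + 3*eps := hgdist _ _
      have h6 : lam * dist (c₃ i) (c₁ k) ≤ lam * (RA + δ + D1) :=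
        mul_le_mul_of_nonneg_left hxd (by linarith)
      have h7 := dist_triangle (h₃ t) (h₃ (min (i:ℝ) d₃)) (h₁ (min (k:ℝ) d₁))
      linarith
  · -- q2 on the geodesic joining g v, g w
    rw [hG₂def] at hq2mem
    obtain ⟨s, hs, rfl⟩ := hq2mem
    obtain ⟨k, hkN, hq2k⟩ := lemmaB hGX hδ hlam hε₁ hK hslimX c₂ N₂ hstep₂ hlow₂
      φ₂ hφ₂0 hφ₂L hφ₂iso s hs
    rw [← hD1def] at hq2k
    refine ⟨h₂ (min (k:ℝ) d₂), Or.inr ?_, ?_⟩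
    · rw [himg₂]
      exact ⟨min (k:ℝ) d₂, ⟨le_min (Nat.cast_nonneg k) dist_nonneg, min_le_right _ _⟩, rfl⟩
    · have hxd : dist (c₃ i) (c₂ k) ≤ RA + δ + D1 := by
        have t4 := dist_triangle4 (c₃ i) (φ₃ t₃) (φ₂ s) (c₂ k)
        linarith
      have hyd : dist (h₃ (min (i:ℝ) d₃)) (h₂ (min (k:ℝ) d₂)) ≤
          lam * dist (c₃ i) (c₂ k) + 3*eps := hgdist _ _
      have h6 : lam * dist (c₃ i) (c₂ k) ≤ lam * (RA + δ + D1) :=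
        mul_le_mul_of_nonneg_left hxd (by linarith)
      have h7 := dist_triangle (h₃ t) (h₃ (min (i:ℝ) d₃)) (h₂ (min (k:ℝ) d₂))
      linarith
end
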